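/- arXiv:2111.12716 — 8 statements merged into one kernel-verified Lean document; each statement's English description precedes it below -/
import Mathlib

section
/- Let n ≥ 1 be an integer, let u = [[α, β],[β̄, ᾱ]] ∈ SU(1,1), and let f : 𝔻 → ℂ be measurable. Then ∫_𝔻 (1−|z|²)^{2n−2} |(−β̄ z + α)^{−2n} f(u⁻¹·z)|² dA(z) = ∫_𝔻 (1−|z|²)^{2n−2} |f(z)|² dA(z) (both sides possibly infinite). That is, the discrete-series action (u·f)(z) = (−β̄ z + α)^{−2n} f(u⁻¹·z) preserves the weighted Bergman norm ‖f‖² = ∫_𝔻 (1−|z|²)^{2n−2}|f(z)|² dA(z). -/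
/-!
The inverse Möbius map `g(z) = (ᾱz − β)/(−β̄z + α)` is a holomorphic bijection of the disk with
`g'(z) = j(z)⁻²`, `j(z) = −β̄z + α`, so its real Jacobian is `|j(z)|⁻⁴`; moreover the identity
`|j(z)|² − |ᾱz − β|² = 1 − |z|²` gives `1 − |g(z)|² = (1 − |z|²)/|j(z)|²`. Substituting `w = g(z)`
in the right-hand integral, the weight `(1 − |w|²)^{2n−2}` and the Jacobian together produce
exactly the factor `(1 − |z|²)^{2n−2} |j(z)|^{−4n}` of the left-hand integrand.
-/

open MeasureTheory Complex ComplexConjugate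
open scoped ENNReal

theorem lintegral_image_eq_lintegral_normSq_deriv_mul {s : Set ℂ} {f f' : ℂ → ℂ}
    (hs : MeasurableSet s) (hf' : ∀ z ∈ s, HasDerivWithinAt f (f' z) s z) (hf : Set.InjOn f s)
    (g : ℂ → ℝ≥0∞) :
    ∫⁻ w in f '' s, g w = ∫⁻ z in s, ENNReal.ofReal (normSq (f' z)) * g (f z) := by
  have hdet (c : ℂ) :
      ((ContinuousLinearMap.toSpanSingleton ℂ c).restrictScalars ℝ).det = normSq c := by
    simp [ContinuousLinearMap.det, LinearMap.det_restrictScalars, Algebra.norm_complex_eq]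
  simpa only [hdet, abs_of_nonneg (normSq_nonneg _)] using
    lintegral_image_eq_lintegral_abs_det_fderiv_mul volume hs
      (fun z hz => ((hf' z hz).hasFDerivWithinAt).restrictScalars ℝ) hf g

namespace SU11

variable {a b : ℂ}

def denom (a b z : ℂ) : ℂ := conj b * z + conj a

/-- The Möbius transformation of `[[a, b], [conj b, conj a]]`, with inverse
`moebius (conj a) (-b)`. -/
noncomputable def moebius (a b z : ℂ) : ℂ := (a * z + b) / denom a b z

theorem mul_conj_sub_mul_conj (h : normSq a - normSq b = 1) : a * conj a - b * conj b = 1 := by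
  simp only [mul_conj, ← ofReal_sub, h, ofReal_one]

theorem normSq_denom_sub_normSq (h : normSq a - normSq b = 1) (z : ℂ) :
    normSq (denom a b z) - normSq (a * z + b) = 1 - normSq z := by
  have key : denom a b z * conj (denom a b z) - (a * z + b) * conj (a * z + b) =
      (a * conj a - b * conj b) * (1 - z * conj z) := by
    simp only [denom, map_add, map_mul, conj_conj]
    ring
  rw [mul_conj_sub_mul_conj h, one_mul] at key
  simp only [mul_conj] at key
  exact_mod_cast key

theorem denom_ne_zero (h : normSq a - normSq b = 1) {z : ℂ} (hz : z ∈ Metric.ball 0 1) :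
    denom a b z ≠ 0 := by
  rw [mem_ball_zero_iff, ← sq_lt_one_iff₀ (norm_nonneg z), Complex.sq_norm] at hz
  rw [← normSq_pos]
  linarith [normSq_denom_sub_normSq h z, normSq_nonneg (a * z + b)]

theorem one_sub_norm_sq_moebius (h : normSq a - normSq b = 1) {z : ℂ} (hz : denom a b z ≠ 0) :
    1 - ‖moebius a b z‖ ^ 2 = (1 - ‖z‖ ^ 2) / ‖denom a b z‖ ^ 2 := by
  simp only [Complex.sq_norm, moebius, normSq_div]
  rw [← normSq_denom_sub_normSq h z]
  field_simp [normSq_eq_zero.not.2 hz]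

theorem mapsTo_moebius_ball (h : normSq a - normSq b = 1) :
    Set.MapsTo (moebius a b) (Metric.ball 0 1) (Metric.ball 0 1) := by
  intro z hz
  have hpos : 0 < (1 - ‖z‖ ^ 2) / ‖denom a b z‖ ^ 2 := by
    have := denom_ne_zero h hz
    rw [mem_ball_zero_iff, ← sq_lt_one_iff₀ (norm_nonneg z)] at hz
    exact div_pos (by linarith) (by positivity)
  rw [← one_sub_norm_sq_moebius h (denom_ne_zero h hz), sub_pos,
    sq_lt_one_iff₀ (norm_nonneg _)] at hpos
  exact mem_ball_zero_iff.2 hpos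

theorem normSq_conj_sub_normSq_neg (h : normSq a - normSq b = 1) :
    normSq (conj a) - normSq (-b) = 1 := by
  simp [h]

theorem moebius_moebius_conj_neg (h : normSq a - normSq b = 1) {z : ℂ}
    (hz : denom (conj a) (-b) z ≠ 0) : moebius a b (moebius (conj a) (-b) z) = z := by
  have hdet := mul_conj_sub_mul_conj h
  have hnum : a * moebius (conj a) (-b) z + b = z / denom (conj a) (-b) z := by
    rw [moebius, mul_div_assoc', div_add' _ _ _ hz]
    congr 1
    simp only [denom, map_neg, conj_conj]
    linear_combination z * hdet
  have hden : denom a b (moebius (conj a) (-b) z) = 1 / denom (conj a) (-b) z := by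
    rw [denom, moebius, mul_div_assoc', div_add' _ _ _ hz]
    congr 1
    simp only [denom, map_neg, conj_conj]
    linear_combination hdet
  rw [moebius, hnum, hden, div_div_div_cancel_right₀ hz, div_one]

theorem bijOn_moebius_ball (h : normSq a - normSq b = 1) :
    Set.BijOn (moebius a b) (Metric.ball 0 1) (Metric.ball 0 1) := by
  have h' := normSq_conj_sub_normSq_neg h
  refine Set.InvOn.bijOn ⟨fun z hz => ?_, fun z hz => ?_⟩ (mapsTo_moebius_ball h)
    (mapsTo_moebius_ball h')
  · simpa using moebius_moebius_conj_neg h' (by simpa using denom_ne_zero h hz)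
  · exact moebius_moebius_conj_neg h (denom_ne_zero h' hz)

theorem hasDerivAt_moebius (h : normSq a - normSq b = 1) {z : ℂ} (hz : denom a b z ≠ 0) :
    HasDerivAt (moebius a b) (denom a b z ^ 2)⁻¹ z := by
  have hnum : HasDerivAt (fun z => a * z + b) a z :=
    (((hasDerivAt_id z).const_mul a).add_const b).congr_deriv (mul_one a)
  have hden : HasDerivAt (denom a b) (conj b) z :=
    (((hasDerivAt_id z).const_mul (conj b)).add_const (conj a)).congr_deriv (mul_one _)
  have hquot := hnum.div hden hz
  rwa [show a * denom a b z - (a * z + b) * conj b = 1 by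
    simp only [denom]; linear_combination mul_conj_sub_mul_conj h, one_div] at hquot

theorem lintegral_ball_eq_lintegral_ball_moebius (h : normSq a - normSq b = 1)
    (F : ℂ → ℝ≥0∞) :
    ∫⁻ w in Metric.ball 0 1, F w =
      ∫⁻ z in Metric.ball 0 1, ENNReal.ofReal (‖denom a b z‖ ^ 4)⁻¹ * F (moebius a b z) := by
  have hbij := bijOn_moebius_ball h
  have hjac (z : ℂ) : normSq (denom a b z ^ 2)⁻¹ = (‖denom a b z‖ ^ 4)⁻¹ := by
    rw [map_inv₀, map_pow, normSq_eq_norm_sq, ← pow_mul]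
  conv_lhs => rw [← hbij.image_eq]
  simpa only [hjac] using lintegral_image_eq_lintegral_normSq_deriv_mul measurableSet_ball
    (fun z hz => (hasDerivAt_moebius h (denom_ne_zero h hz)).hasDerivWithinAt) hbij.injOn F

end SU11

theorem weight_mul_sq_nnnorm_zpow_mul (s : ℝ) (m : ℕ) (d x : ℂ) :
    ENNReal.ofReal (s ^ (2 * m)) * (‖d ^ (-(2 * ((m + 1 : ℕ) : ℤ))) * x‖₊ : ℝ≥0∞) ^ 2 =
      ENNReal.ofReal (‖d‖ ^ 4)⁻¹ *
        (ENNReal.ofReal ((s / ‖d‖ ^ 2) ^ (2 * m)) * (‖x‖₊ : ℝ≥0∞) ^ 2) := by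
  have hsq (y : ℂ) : (‖y‖₊ : ℝ≥0∞) ^ 2 = ENNReal.ofReal (‖y‖ ^ 2) := by
    rw [ENNReal.ofReal_pow (norm_nonneg y), ofReal_norm, enorm_eq_nnnorm]
  rw [nnnorm_mul, ENNReal.coe_mul, mul_pow, ← mul_assoc, ← mul_assoc, hsq,
    ← ENNReal.ofReal_mul (Even.pow_nonneg (even_two_mul m) s),
    ← ENNReal.ofReal_mul (by positivity)]
  congr 2
  rw [show -(2 * ((m + 1 : ℕ) : ℤ)) = -((2 * m + 2 : ℕ) : ℤ) by push_cast; ring, zpow_neg,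
    zpow_natCast, norm_inv, norm_pow]
  ring

open SU11 in
theorem discrete_series_action_preserves_norm_general (n : ℕ) (hn : 1 ≤ n) (α β : ℂ)
    (hu : Complex.normSq α - Complex.normSq β = 1) (f : ℂ → ℂ) :
    (∫⁻ z in Metric.ball (0 : ℂ) 1,
        ENNReal.ofReal ((1 - ‖z‖ ^ 2) ^ (2 * n - 2)) *
          (‖(-(starRingEnd ℂ) β * z + α) ^ (-(2 * n : ℤ)) *
              f (((starRingEnd ℂ) α * z - β) / (-(starRingEnd ℂ) β * z + α))‖₊ : ℝ≥0∞) ^ 2) =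
      ∫⁻ z in Metric.ball (0 : ℂ) 1,
        ENNReal.ofReal ((1 - ‖z‖ ^ 2) ^ (2 * n - 2)) * (‖f z‖₊ : ℝ≥0∞) ^ 2 := by
  obtain ⟨m, rfl⟩ := Nat.exists_eq_add_of_le' hn
  -- `u⁻¹ = [[conj α, -β], [-conj β, α]]`
  have hu' := normSq_conj_sub_normSq_neg hu
  have hg (z : ℂ) : (conj α * z - β) / (-conj β * z + α) = moebius (conj α) (-β) z := by
    simp [moebius, denom, sub_eq_add_neg]
  have hj (z : ℂ) : -conj β * z + α = denom (conj α) (-β) z := by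
    simp [denom]
  simp_rw [hg, hj, show 2 * (m + 1) - 2 = 2 * m by omega]
  rw [lintegral_ball_eq_lintegral_ball_moebius hu'
    (fun w => ENNReal.ofReal ((1 - ‖w‖ ^ 2) ^ (2 * m)) * (‖f w‖₊ : ℝ≥0∞) ^ 2)]
  refine setLIntegral_congr_fun measurableSet_ball fun z hz => ?_
  rw [one_sub_norm_sq_moebius hu' (denom_ne_zero hu' hz)]
  exact weight_mul_sq_nnnorm_zpow_mul _ m _ _

/-- The discrete-series action of `u = [[α, β],[β̄, ᾱ]] ∈ SU(1,1)`,
`(u·f)(z) = (−β̄ z + α)^{−2n} f(u⁻¹·z)` with `u⁻¹·z = (ᾱz − β)/(−β̄z + α)`,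
preserves the weighted Bergman norm `‖f‖² = ∫_𝔻 (1−|z|²)^{2n−2}|f(z)|² dA(z)`
(both sides possibly infinite). -/
theorem discrete_series_action_preserves_norm (n : ℕ) (hn : 1 ≤ n) (α β : ℂ)
    (hu : Complex.normSq α - Complex.normSq β = 1) (f : ℂ → ℂ) (hf : Measurable f) :
    (∫⁻ z in Metric.ball (0 : ℂ) 1,
        ENNReal.ofReal ((1 - ‖z‖ ^ 2) ^ (2 * n - 2)) *
          (‖(-(starRingEnd ℂ) β * z + α) ^ (-(2 * n : ℤ)) *
              f (((starRingEnd ℂ) α * z - β) / (-(starRingEnd ℂ) β * z + α))‖₊ : ℝ≥0∞) ^ 2) =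
      ∫⁻ z in Metric.ball (0 : ℂ) 1,
        ENNReal.ofReal ((1 - ‖z‖ ^ 2) ^ (2 * n - 2)) * (‖f z‖₊ : ℝ≥0∞) ^ 2 :=
  discrete_series_action_preserves_norm_general n hn α β hu f
end

section
/- Let n ≥ 1 be an integer and let w₁, w₂ ∈ ℂ with |w₁| > 1 and |w₂| > 1. Then ((2n−1)/π) ∫_𝔻 (1−|z|²)^{2n−2} (conj(z) − conj(w₁))^{−2n} (z − w₂)^{−2n} dA(z) = (1 − conj(w₁)·w₂)^{−2n}. (Inner product of the coherent states 𝒪(w₁), 𝒪(w₂): (𝒪(w₁), 𝒪(w₂)) = (1 − w₁* w₂)^{−2n}.) -/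
/-!
Expand both coherent states in power series on the disk: for `‖z‖ < ‖w‖`,
`(w - z)^{-(j+1)} = ∑ₖ C(k+j, j) w^{-(k+j+1)} zᵏ`. The monomials `z̄ᵏ zᵐ` are orthogonal for the
radial weight `(1 - |z|²)^d` (rotating the disk multiplies the integral by a phase), and
`∫_𝔻 (1 - |z|²)^d |z|^{2k} = π k! d! / (k+d+1)!` is a Beta integral. With `j = d + 1` the diagonal
terms collapse to `π/(d+1) · C(k+j, j) (ūw)^{-(k+j+1)}`, which resums to
`π/(d+1) · (ūw - 1)^{-(d+2)}`; for `d = 2n - 2` the exponent is even, so the sign drops out.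
-/

open MeasureTheory Complex Real Set ComplexConjugate
open scoped Nat

section Series

variable {𝕜 : Type*}

theorem hasSum_choose_mul_inv_pow_mul_pow [NormedField 𝕜] [CompleteSpace 𝕜] (j : ℕ) {w z : 𝕜}
    (h : ‖z‖ < ‖w‖) :
    HasSum (fun k => ((k + j).choose j : 𝕜) * w⁻¹ ^ (k + j + 1) * z ^ k)
      ((w - z) ^ (j + 1))⁻¹ := by
  have hw : w ≠ 0 := norm_pos_iff.mp ((norm_nonneg z).trans_lt h)
  have hr : ‖z / w‖ < 1 := by
    rwa [norm_div, div_lt_one ((norm_nonneg z).trans_lt h)]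
  have hval : w⁻¹ ^ (j + 1) * (1 / (1 - z / w) ^ (j + 1)) = ((w - z) ^ (j + 1))⁻¹ := by
    rw [one_div, ← inv_pow, ← mul_pow, ← mul_inv, mul_sub, mul_one, mul_div_cancel₀ z hw,
      inv_pow]
  have hterm : ∀ k, w⁻¹ ^ (j + 1) * (((k + j).choose j : 𝕜) * (z / w) ^ k) =
      ((k + j).choose j : 𝕜) * w⁻¹ ^ (k + j + 1) * z ^ k := fun k => by
    rw [div_eq_mul_inv]; ring
  simpa only [hval, hterm] using
    (hasSum_choose_mul_geometric_of_norm_lt_one j hr).mul_left (w⁻¹ ^ (j + 1))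

theorem summable_norm_choose_mul_inv_pow [RCLike 𝕜] (j : ℕ) {w : 𝕜} (hw : 1 < ‖w‖) :
    Summable fun k => ‖((k + j).choose j : 𝕜) * w⁻¹ ^ (k + j + 1)‖ := by
  refine (hasSum_choose_mul_inv_pow_mul_pow (𝕜 := ℝ) j (w := ‖w‖) (z := 1) ?_).summable.congr
    fun k => ?_
  · simpa using hw
  · simp [norm_mul, norm_pow, norm_inv]

end Series

theorem integral_ofReal_pow_mul_one_sub_pow (k d : ℕ) :
    ∫ x in (0 : ℝ)..1, (x : ℂ) ^ k * (1 - x) ^ d = k ! * d ! / (k + d + 1)! := by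
  have hΓ := Complex.Gamma_mul_Gamma_eq_betaIntegral (s := k + 1) (t := d + 1)
    (by simp; positivity) (by simp; positivity)
  rw [show (k + 1 : ℂ) + (d + 1) = ((k + d + 1 : ℕ) : ℂ) + 1 by push_cast; ring] at hΓ
  simp only [Complex.Gamma_nat_eq_factorial, Complex.betaIntegral, add_sub_cancel_right,
    Complex.cpow_natCast] at hΓ
  rw [hΓ, mul_div_cancel_left₀ _ (by exact_mod_cast (k + d + 1).factorial_ne_zero)]

theorem integral_ofReal_pow_two_mul_add_one_mul_one_sub_sq_pow (k d : ℕ) :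
    ∫ r in (0 : ℝ)..1, (r : ℂ) ^ (2 * k + 1) * (1 - r ^ 2) ^ d =
      (k ! : ℂ) * d ! / (2 * (k + d + 1)!) := by
  have hsubst := intervalIntegral.integral_deriv_smul_comp (a := 0) (b := 1)
    (f := fun r : ℝ => r ^ 2) (f' := fun r => 2 * r) (g := fun x : ℝ => (x : ℂ) ^ k * (1 - x) ^ d)
    (fun r _ => by simpa using hasDerivAt_pow 2 r) (by fun_prop) (by fun_prop)
  simp only [Function.comp_def, ne_eq, OfNat.ofNat_ne_zero, not_false_eq_true, zero_pow,
    one_pow, integral_ofReal_pow_mul_one_sub_pow] at hsubst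
  rw [mul_comm (2 : ℂ), ← div_div, ← hsubst, ← intervalIntegral.integral_div]
  congr 1 with r
  rw [Complex.real_smul]
  push_cast
  ring

theorem setIntegral_ball_comp_norm {R : ℝ} (hR : 0 ≤ R) (h : ℝ → ℂ) :
    ∫ z in Metric.ball (0 : ℂ) R, h ‖z‖ = 2 * π * ∫ r in (0 : ℝ)..R, r * h r := by
  have hball : (Metric.ball (0 : ℂ) R).indicator (fun z => h ‖z‖) =
      fun z => (Iio R).indicator h ‖z‖ := by
    ext z; simp [indicator]
  have hsmul : (fun r : ℝ => r ^ (2 - 1) • (Iio R).indicator h r) =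
      (Iio R).indicator (fun r => r * h r) := by
    ext r; simp [indicator, Complex.real_smul]
  rw [← integral_indicator measurableSet_ball, hball, integral_fun_norm_addHaar volume,
    Complex.finrank_real_complex, measureReal_def, Complex.volume_ball, hsmul,
    setIntegral_indicator measurableSet_Iio, Ioi_inter_Iio, intervalIntegral.integral_of_le hR,
    integral_Ioc_eq_integral_Ioo]
  simp [nsmul_eq_mul, Complex.real_smul, mul_assoc]

theorem exists_norm_eq_one_conj_pow_mul_pow_eq_neg_one {k m : ℕ} (h : k ≠ m) :
    ∃ c : ℂ, ‖c‖ = 1 ∧ conj c ^ k * c ^ m = -1 := by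
  have hmk : (m : ℂ) - k ≠ 0 := sub_ne_zero.mpr (by exact_mod_cast h.symm)
  refine ⟨Complex.exp ((π / (m - k) : ℝ) * Complex.I), Complex.norm_exp_ofReal_mul_I _, ?_⟩
  rw [← Complex.exp_conj, ← Complex.exp_nat_mul, ← Complex.exp_nat_mul, ← Complex.exp_add,
    ← Complex.exp_pi_mul_I]
  congr 1
  simp only [map_mul, Complex.conj_ofReal, Complex.conj_I]
  push_cast
  field_simp
  ring

theorem setIntegral_ball_comp_norm_mul_conj_pow_mul_pow_of_ne (h : ℝ → ℂ) (R : ℝ) {k m : ℕ}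
    (hkm : k ≠ m) :
    ∫ z in Metric.ball (0 : ℂ) R, h ‖z‖ * conj z ^ k * z ^ m = 0 := by
  obtain ⟨c, hc, hc_pow⟩ := exists_norm_eq_one_conj_pow_mul_pow_eq_neg_one hkm
  let ρ := rotation ⟨c, by simpa [Submonoid.unitSphere] using hc⟩
  have hρ : ∀ z, ρ z = c * z := fun z => rotation_apply _ z
  have hpre : ρ ⁻¹' Metric.ball 0 R = Metric.ball 0 R := by
    ext z; simp
  have hinv := ρ.measurePreserving.setIntegral_preimage_emb ρ.toHomeomorph.measurableEmbedding
    (fun z => h ‖z‖ * conj z ^ k * z ^ m) (Metric.ball 0 R)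
  simp only [hpre, hρ, norm_mul, hc, one_mul, map_mul, mul_pow] at hinv
  have hneg : ∀ z : ℂ, h ‖z‖ * (conj c ^ k * conj z ^ k) * (c ^ m * z ^ m) =
      (conj c ^ k * c ^ m) * (h ‖z‖ * conj z ^ k * z ^ m) := fun z => by ring
  simp only [hneg, hc_pow, neg_one_mul, integral_neg] at hinv
  exact self_eq_neg.mp hinv.symm

theorem setIntegral_ball_one_sub_sq_pow_mul_conj_pow_mul_pow (d k m : ℕ) :
    ∫ z in Metric.ball (0 : ℂ) 1, ((1 - ‖z‖ ^ 2 : ℝ) : ℂ) ^ d * conj z ^ k * z ^ m =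
      if k = m then (π : ℂ) * k ! * d ! / (k + d + 1)! else 0 := by
  split_ifs with hkm
  · subst hkm
    have hradial : ∀ z : ℂ, ((1 - ‖z‖ ^ 2 : ℝ) : ℂ) ^ d * conj z ^ k * z ^ k =
        ((1 - ‖z‖ ^ 2 : ℝ) : ℂ) ^ d * ((‖z‖ : ℂ) ^ 2) ^ k := fun z => by
      rw [mul_assoc, ← mul_pow, Complex.conj_mul']
    have hpoly : (fun r : ℝ => (r : ℂ) * (((1 - r ^ 2 : ℝ) : ℂ) ^ d * ((r : ℂ) ^ 2) ^ k)) =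
        fun r : ℝ => (r : ℂ) ^ (2 * k + 1) * (1 - (r : ℂ) ^ 2) ^ d := by
      ext r; push_cast; ring
    simp_rw [hradial]
    rw [setIntegral_ball_comp_norm zero_le_one
      (fun r => ((1 - r ^ 2 : ℝ) : ℂ) ^ d * ((r : ℂ) ^ 2) ^ k), hpoly,
      integral_ofReal_pow_two_mul_add_one_mul_one_sub_sq_pow]
    field_simp
  · exact setIntegral_ball_comp_norm_mul_conj_pow_mul_pow_of_ne
      (fun r => ((1 - r ^ 2 : ℝ) : ℂ) ^ d) 1 hkm

theorem norm_one_sub_sq_pow_mul_conj_pow_mul_pow_le_one (d k m : ℕ) {z : ℂ} (hz : ‖z‖ ≤ 1) :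
    ‖((1 - ‖z‖ ^ 2 : ℝ) : ℂ) ^ d * conj z ^ k * z ^ m‖ ≤ 1 := by
  have h₀ : 0 ≤ 1 - ‖z‖ ^ 2 := by nlinarith [norm_nonneg z]
  have h₁ : 1 - ‖z‖ ^ 2 ≤ 1 := by nlinarith [norm_nonneg z]
  simp only [norm_mul, norm_pow, Complex.norm_real, Real.norm_of_nonneg h₀, Complex.norm_conj]
  calc _ ≤ (1 : ℝ) * 1 * 1 := by
        gcongr
        exacts [pow_le_one₀ h₀ h₁, pow_le_one₀ (norm_nonneg z) hz, pow_le_one₀ (norm_nonneg z) hz]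
    _ = 1 := by ring

theorem setIntegral_ball_one_sub_sq_pow_mul_tsum_mul_tsum (d : ℕ) {a b : ℕ → ℂ}
    (ha : Summable fun k => ‖a k‖) (hb : Summable fun m => ‖b m‖) :
    ∫ z in Metric.ball (0 : ℂ) 1,
        ((1 - ‖z‖ ^ 2 : ℝ) : ℂ) ^ d * (∑' k, a k * conj z ^ k) * ∑' m, b m * z ^ m =
      ∑' k, a k * b k * (π * k ! * d ! / (k + d + 1)!) := by
  set F : ℕ × ℕ → ℂ → ℂ := fun p z =>
    a p.1 * b p.2 * (((1 - ‖z‖ ^ 2 : ℝ) : ℂ) ^ d * conj z ^ p.1 * z ^ p.2)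
  have hbound : ∀ p, ∀ z ∈ Metric.ball (0 : ℂ) 1, ‖F p z‖ ≤ ‖a p.1‖ * ‖b p.2‖ := by
    intro p z hz
    rw [norm_mul, norm_mul]
    exact mul_le_of_le_one_right (by positivity)
      (norm_one_sub_sq_pow_mul_conj_pow_mul_pow_le_one d _ _ (mem_ball_zero_iff.mp hz).le)
  have hexpand : ∀ z ∈ Metric.ball (0 : ℂ) 1,
      ((1 - ‖z‖ ^ 2 : ℝ) : ℂ) ^ d * (∑' k, a k * conj z ^ k) * ∑' m, b m * z ^ m =
        ∑' p, F p z := by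
    intro z hz
    have hz : ‖z‖ ≤ 1 := (mem_ball_zero_iff.mp hz).le
    have hsa : Summable fun k => ‖a k * conj z ^ k‖ :=
      ha.of_nonneg_of_le (fun _ => norm_nonneg _) fun k => by
        simpa [norm_mul] using
          mul_le_of_le_one_right (norm_nonneg (a k)) (pow_le_one₀ (norm_nonneg z) hz)
    have hsb : Summable fun m => ‖b m * z ^ m‖ :=
      hb.of_nonneg_of_le (fun _ => norm_nonneg _) fun m => by
        simpa [norm_mul] using
          mul_le_of_le_one_right (norm_nonneg (b m)) (pow_le_one₀ (norm_nonneg z) hz)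
    rw [mul_assoc, tsum_mul_tsum_of_summable_norm hsa hsb, ← tsum_mul_left]
    congr 1 with p
    ring
  have hint : ∀ p, IntegrableOn (F p) (Metric.ball 0 1) := fun p =>
    IntegrableOn.of_bound measure_ball_lt_top (by fun_prop) _
      ((ae_restrict_iff' measurableSet_ball).mpr (Filter.Eventually.of_forall (hbound p)))
  have hsum : Summable fun p => ∫ z in Metric.ball (0 : ℂ) 1, ‖F p z‖ := by
    refine Summable.of_nonneg_of_le (fun p => integral_nonneg fun _ => norm_nonneg _)
      (fun p => ?_)
      ((summable_mul_of_summable_norm (f := fun k => ‖a k‖) (g := fun m => ‖b m‖)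
        (by simpa using ha) (by simpa using hb)).mul_right (volume.real (Metric.ball (0 : ℂ) 1)))
    refine (le_abs_self _).trans ?_
    simpa using norm_setIntegral_le_of_norm_le_const (f := fun z => ‖F p z‖) (μ := volume)
      measure_ball_lt_top fun z hz => by simpa using hbound p z hz
  have hterm : ∀ p : ℕ × ℕ, ∫ z in Metric.ball (0 : ℂ) 1, F p z =
      a p.1 * b p.2 * if p.1 = p.2 then (π : ℂ) * p.1 ! * d ! / (p.1 + d + 1)! else 0 :=
    fun p => by rw [integral_const_mul, setIntegral_ball_one_sub_sq_pow_mul_conj_pow_mul_pow]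
  have hdiag : (Function.support fun p : ℕ × ℕ => ∫ z in Metric.ball (0 : ℂ) 1, F p z) ⊆
      Set.range fun k => (k, k) := by
    intro p hp
    by_cases h : p.1 = p.2
    · exact ⟨p.1, Prod.ext rfl h⟩
    · simp [hterm, h] at hp
  have hinj : (fun k : ℕ => (k, k)).Injective := fun k₁ k₂ h => (Prod.ext_iff.mp h).1
  rw [setIntegral_congr_fun measurableSet_ball hexpand,
    ← integral_tsum_of_summable_integral_norm hint hsum, ← hinj.tsum_eq hdiag]
  simp only [hterm, if_true]

theorem add_succ_choose_mul_factorial_mul_factorial_div {K : Type*} [Field K] [CharZero K]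
    (k d : ℕ) : ((k + d + 1).choose (d + 1) : K) * k ! * d ! / (k + d + 1)! = 1 / (d + 1) := by
  have h := Nat.add_choose_mul_factorial_mul_factorial k (d + 1)
  rw [← add_assoc, Nat.factorial_succ] at h
  have hf : ((k + d + 1)! : K) ≠ 0 := by exact_mod_cast Nat.factorial_ne_zero _
  field_simp
  exact_mod_cast by linarith [h]

theorem setIntegral_ball_one_sub_sq_pow_mul_inv_sub_conj_pow_mul_inv_sub_pow (d : ℕ) {u w : ℂ}
    (hu : 1 < ‖u‖) (hw : 1 < ‖w‖) :
    ∫ z in Metric.ball (0 : ℂ) 1,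
        ((1 - ‖z‖ ^ 2 : ℝ) : ℂ) ^ d * ((u - conj z) ^ (d + 2))⁻¹ * ((w - z) ^ (d + 2))⁻¹ =
      π / (d + 1) * ((u * w - 1) ^ (d + 2))⁻¹ := by
  set c : ℂ → ℕ → ℂ := fun v k => ((k + (d + 1)).choose (d + 1) : ℂ) * v⁻¹ ^ (k + (d + 1) + 1)
  have hexpand : ∀ z ∈ Metric.ball (0 : ℂ) 1,
      ((1 - ‖z‖ ^ 2 : ℝ) : ℂ) ^ d * ((u - conj z) ^ (d + 2))⁻¹ * ((w - z) ^ (d + 2))⁻¹ =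
        ((1 - ‖z‖ ^ 2 : ℝ) : ℂ) ^ d * (∑' k, c u k * conj z ^ k) * ∑' m, c w m * z ^ m := by
    intro z hz
    have hz : ‖z‖ < 1 := mem_ball_zero_iff.mp hz
    rw [(hasSum_choose_mul_inv_pow_mul_pow (d + 1) (z := conj z)
        (by simpa using hz.trans hu)).tsum_eq,
      (hasSum_choose_mul_inv_pow_mul_pow (d + 1) (hz.trans hw)).tsum_eq]
  have hterm : ∀ k, c u k * c w k * (π * k ! * d ! / (k + d + 1)!) =
      π / (d + 1) * (c (u * w) k * 1 ^ k) := by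
    intro k
    have h := add_succ_choose_mul_factorial_mul_factorial_div (K := ℂ) k d
    simp only [c, one_pow, mul_one, mul_inv, mul_pow, ← add_assoc] at h ⊢
    linear_combination (π * ((k + d + 1).choose (d + 1) : ℂ) * u⁻¹ ^ (k + d + 1 + 1) *
      w⁻¹ ^ (k + d + 1 + 1)) * h
  have huw : ‖(1 : ℂ)‖ < ‖u * w‖ := by
    rw [norm_one, norm_mul]
    nlinarith
  rw [setIntegral_congr_fun measurableSet_ball hexpand,
    setIntegral_ball_one_sub_sq_pow_mul_tsum_mul_tsum d (summable_norm_choose_mul_inv_pow _ hu)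
      (summable_norm_choose_mul_inv_pow _ hw),
    (tsum_congr hterm).trans tsum_mul_left,
    (hasSum_choose_mul_inv_pow_mul_pow (d + 1) huw).tsum_eq]

/-- Inner product of coherent states `𝒪(w₁), 𝒪(w₂)` in the discrete series model:
`((2n−1)/π) ∫_𝔻 (1−|z|²)^{2n−2} (z̄ − w̄₁)^{−2n} (z − w₂)^{−2n} dA(z) = (1 − w̄₁ w₂)^{−2n}`. -/
theorem coherent_state_inner_product (n : ℕ) (hn : 1 ≤ n) (w₁ w₂ : ℂ)
    (h₁ : 1 < ‖w₁‖) (h₂ : 1 < ‖w₂‖) :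
    (((2 * (n : ℝ) - 1) / π : ℝ) : ℂ) *
        ∫ z in Metric.ball (0 : ℂ) 1,
          ((1 - ‖z‖ ^ 2 : ℝ) : ℂ) ^ (2 * n - 2) *
            ((starRingEnd ℂ) z - (starRingEnd ℂ) w₁) ^ (-(2 * n : ℤ)) *
            (z - w₂) ^ (-(2 * n : ℤ)) =
      (1 - (starRingEnd ℂ) w₁ * w₂) ^ (-(2 * n : ℤ)) := by
  have hd : 2 * n - 2 + 2 = 2 * n := by omega
  have hzpow : ∀ a b : ℂ, (a - b) ^ (-(2 * n : ℤ)) = ((b - a) ^ (2 * n - 2 + 2))⁻¹ := by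
    intro a b
    rw [hd, ← neg_sub, zpow_neg, Even.neg_zpow (even_two_mul _)]
    norm_cast
  have hcoef : ((2 * n - 2 : ℕ) : ℂ) + 1 = 2 * n - 1 := by
    push_cast [Nat.cast_sub (by omega : 2 ≤ 2 * n)]
    ring
  have hne : (2 * n - 1 : ℂ) ≠ 0 := hcoef ▸ Nat.cast_add_one_ne_zero _
  simp_rw [hzpow]
  rw [setIntegral_ball_one_sub_sq_pow_mul_inv_sub_conj_pow_mul_inv_sub_pow (2 * n - 2)
    (by rwa [Complex.norm_conj]) h₂, hcoef]
  push_cast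
  field_simp
end

section
/- Let n ≥ 1 be an integer and let f : 𝔻 → ℂ be holomorphic with ∫_𝔻 (1−|z|²)^{2n−2} |f(z)|² dA(z) < ∞. If ∫_𝔻 (1−|z|²)^{2n−2} (conj(z) − conj(w))^{−2n} f(z) dA(z) = 0 for every w ∈ ℂ with |w| > 1, then f is identically zero. (Equivalently: the span of the coherent states (z−w)^{−2n}, |w| > 1, is dense in the weighted Bergman space.) -/
/-!
Put `g = (1 - |z|²)^(2n-2) f`; it is integrable on the disk because the weight is at most `1`.
For `0 < |u| < 1` the point `w = 1 / conj u` lies outside the disk and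
`(conj z - conj w)^(-2n) = u^(2n) (1 - conj z u)^(-2n)`, so `G₀(u) = ∫ (1 - conj z u)^(-2n) g`
vanishes on the punctured disk, hence on the whole disk by continuity. Differentiating under the
integral sign, `G_j' = (2n + j) G_{j+1}` for `G_j(u) = ∫ conj z^j (1 - conj z u)^(-2n-j) g`, so
every `G_j` vanishes, and in particular every moment `G_j(0) = ∫ conj z^j g`. In polar
coordinates this moment is `2π (∫₀¹ r^(2j+1) (1 - r²)^(2n-2) dr) a_j`, where `a_j` is the `j`-th
Taylor coefficient of `f` at `0`. Hence all Taylor coefficients vanish and `f = 0` by the identity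
theorem.
-/

open MeasureTheory Complex Metric Set Real ComplexConjugate Filter Topology
open scoped ENNReal NNReal

theorem ENNReal.mul_le_one_add_mul_sq {a b : ℝ≥0∞} (ha : a ≤ 1) : a * b ≤ 1 + a * b ^ 2 := by
  rcases le_total b 1 with hb | hb
  · exact (mul_le_one' ha hb).trans le_self_add
  · calc a * b ≤ a * b ^ 2 := by gcongr; exact le_self_pow₀ hb two_ne_zero
      _ ≤ 1 + a * b ^ 2 := le_add_self

theorem integrableOn_ofReal_mul_of_lintegral_mul_sq_lt_top {α : Type*} [MeasurableSpace α]
    {μ : Measure α} {s : Set α} (hs : MeasurableSet s) (hμs : μ s ≠ ∞) {ρ : α → ℝ} {g : α → ℂ}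
    (hρ : ∀ x ∈ s, ρ x ∈ Icc 0 1)
    (hmeas : AEStronglyMeasurable (fun x => (ρ x : ℂ) * g x) (μ.restrict s))
    (hfin : ∫⁻ x in s, ENNReal.ofReal (ρ x) * (‖g x‖₊ : ℝ≥0∞) ^ 2 ∂μ < ⊤) :
    IntegrableOn (fun x => (ρ x : ℂ) * g x) s μ := by
  refine ⟨hmeas, ?_⟩
  have hpointwise : ∀ᵐ x ∂μ.restrict s,
      ‖(ρ x : ℂ) * g x‖ₑ ≤ 1 + ENNReal.ofReal (ρ x) * (‖g x‖₊ : ℝ≥0∞) ^ 2 := by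
    filter_upwards [ae_restrict_mem hs] with x hx
    rw [enorm_mul, ← ofReal_norm, Complex.norm_real, Real.norm_of_nonneg (hρ x hx).1]
    exact ENNReal.mul_le_one_add_mul_sq (ENNReal.ofReal_le_one.mpr (hρ x hx).2)
  calc ∫⁻ x in s, ‖(ρ x : ℂ) * g x‖ₑ ∂μ
      ≤ ∫⁻ x in s, (1 + ENNReal.ofReal (ρ x) * (‖g x‖₊ : ℝ≥0∞) ^ 2) ∂μ :=
        lintegral_mono_ae hpointwise
    _ = μ s + ∫⁻ x in s, ENNReal.ofReal (ρ x) * (‖g x‖₊ : ℝ≥0∞) ^ 2 ∂μ := by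
      rw [lintegral_add_left measurable_const, setLIntegral_const, one_mul]
    _ < ⊤ := ENNReal.add_lt_top.mpr ⟨hμs.lt_top, hfin⟩

theorem integrableOn_one_sub_norm_sq_pow_mul {f : ℂ → ℂ} (hf : ContinuousOn f (ball 0 1)) (k : ℕ)
    (hL2 : ∫⁻ z in ball (0 : ℂ) 1, ENNReal.ofReal ((1 - ‖z‖ ^ 2) ^ k) * (‖f z‖₊ : ℝ≥0∞) ^ 2 < ⊤) :
    IntegrableOn (fun z => (((1 - ‖z‖ ^ 2) ^ k : ℝ) : ℂ) * f z) (ball 0 1) := by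
  refine integrableOn_ofReal_mul_of_lintegral_mul_sq_lt_top measurableSet_ball
    measure_ball_lt_top.ne (fun z hz => ?_)
    (((by fun_prop : Continuous fun z : ℂ => (((1 - ‖z‖ ^ 2) ^ k : ℝ) : ℂ)).continuousOn.mul hf)
      |>.aestronglyMeasurable measurableSet_ball) hL2
  have hz : ‖z‖ < 1 := mem_ball_zero_iff.mp hz
  exact ⟨by bound, pow_le_one₀ (by bound) (by simp only [sub_le_self_iff]; positivity)⟩

theorem sub_inv_zpow_neg_two_mul {K : Type*} [Field K] {u : K} (hu : u ≠ 0) (a : K) (n : ℕ) :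
    (a - u⁻¹) ^ (-(2 * n : ℤ)) = u ^ (2 * n) * (1 - a * u) ^ (-(2 * n : ℤ)) := by
  have heven : Even (-(2 * n : ℤ)) := (even_two_mul (n : ℤ)).neg
  rw [show a - u⁻¹ = -u⁻¹ * (1 - a * u) by field_simp; ring, mul_zpow, heven.neg_zpow, inv_zpow',
    neg_neg]
  norm_cast

noncomputable def conjKernel (m j : ℕ) (u z : ℂ) : ℂ :=
  conj z ^ j * (1 - conj z * u) ^ (-((m + j : ℕ) : ℤ))

theorem one_sub_norm_le_norm_one_sub_conj_mul {z : ℂ} (hz : ‖z‖ ≤ 1) (u : ℂ) :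
    1 - ‖u‖ ≤ ‖1 - conj z * u‖ := by
  have : ‖conj z * u‖ ≤ ‖u‖ := by
    rw [norm_mul, Complex.norm_conj]; exact mul_le_of_le_one_left (norm_nonneg u) hz
  linarith [norm_sub_norm_le (1 : ℂ) (conj z * u), norm_one (α := ℂ)]

theorem norm_conjKernel_le {m j : ℕ} {z u : ℂ} {ε : ℝ} (hz : ‖z‖ ≤ 1) (hε : 0 < ε)
    (hu : ‖u‖ ≤ 1 - ε) : ‖conjKernel m j u z‖ ≤ ε ^ (-((m + j : ℕ) : ℤ)) := by
  have hεle : ε ≤ ‖1 - conj z * u‖ := by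
    linarith [one_sub_norm_le_norm_one_sub_conj_mul hz u]
  rw [conjKernel, norm_mul, norm_pow, Complex.norm_conj, norm_zpow, zpow_neg, zpow_neg,
    zpow_natCast, zpow_natCast]
  calc ‖z‖ ^ j * (‖1 - conj z * u‖ ^ (m + j))⁻¹ ≤ 1 * (ε ^ (m + j))⁻¹ := by
        gcongr
        exact pow_le_one₀ (norm_nonneg z) hz
    _ = (ε ^ (m + j))⁻¹ := one_mul _

theorem continuousOn_conjKernel (m j : ℕ) {u : ℂ} (hu : ‖u‖ < 1) :
    ContinuousOn (conjKernel m j u) (closedBall 0 1) := by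
  intro z hz
  have hne : 1 - conj z * u ≠ 0 := norm_pos_iff.mp <|
    (sub_pos.mpr hu).trans_le <|
      one_sub_norm_le_norm_one_sub_conj_mul (mem_closedBall_zero_iff.mp hz) u
  exact ((Complex.continuous_conj.pow j).continuousAt.mul
    ((continuous_const.sub (Complex.continuous_conj.mul continuous_const)).continuousAt.zpow₀ _
      (Or.inl hne))).continuousWithinAt

theorem hasDerivAt_conjKernel (m j : ℕ) {u z : ℂ} (h : 1 - conj z * u ≠ 0) :
    HasDerivAt (fun v => conjKernel m j v z) ((m + j : ℕ) * conjKernel m (j + 1) u z) u := by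
  have hlin : HasDerivAt (fun v => 1 - conj z * v) (-conj z) u := by
    simpa using ((hasDerivAt_id u).const_mul (conj z)).const_sub 1
  have hd :=
    ((hasDerivAt_zpow (-((m + j : ℕ) : ℤ)) _ (Or.inl h)).comp u hlin).const_mul (conj z ^ j)
  refine HasDerivAt.congr_deriv (f := fun v => conjKernel m j v z) hd ?_
  rw [conjKernel, show -((m + (j + 1) : ℕ) : ℤ) = -((m + j : ℕ) : ℤ) - 1 by push_cast; ring]
  push_cast
  ring

section kernelMoment

variable {μ : Measure ℂ} {g : ℂ → ℂ}

noncomputable def kernelMoment (μ : Measure ℂ) (g : ℂ → ℂ) (m j : ℕ) (u : ℂ) : ℂ :=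
  ∫ z in ball 0 1, conjKernel m j u z * g z ∂μ

theorem integrableOn_conjKernel_mul (hg : IntegrableOn g (ball 0 1) μ) (m j : ℕ) {u : ℂ}
    (hu : ‖u‖ < 1) : IntegrableOn (fun z => conjKernel m j u z * g z) (ball 0 1) μ := by
  refine hg.bdd_mul (c := (1 - ‖u‖) ^ (-((m + j : ℕ) : ℤ)))
    (((continuousOn_conjKernel m j hu).mono ball_subset_closedBall).aestronglyMeasurable
      measurableSet_ball) ?_
  filter_upwards [ae_restrict_mem measurableSet_ball] with z hz
  exact norm_conjKernel_le (mem_ball_zero_iff.mp hz).le (sub_pos.mpr hu) (sub_sub_cancel 1 _).ge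

theorem integrableOn_conj_pow_mul (hg : IntegrableOn g (ball 0 1) μ) (j : ℕ) :
    IntegrableOn (fun z => conj z ^ j * g z) (ball 0 1) μ := by
  simpa [conjKernel] using integrableOn_conjKernel_mul hg 0 j (norm_zero.trans_lt one_pos)

theorem kernelMoment_zero_eq_zero_of_orthogonal {n : ℕ}
    (horth : ∀ w : ℂ, 1 < ‖w‖ → ∫ z in ball 0 1, (conj z - conj w) ^ (-(2 * n : ℤ)) * g z ∂μ = 0)
    {u : ℂ} (hu : u ∈ ball (0 : ℂ) 1) (hu0 : u ≠ 0) : kernelMoment μ g (2 * n) 0 u = 0 := by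
  have hw : 1 < ‖(conj u)⁻¹‖ := by
    rw [norm_inv, Complex.norm_conj]
    exact (one_lt_inv₀ (norm_pos_iff.mpr hu0)).mpr (mem_ball_zero_iff.mp hu)
  have h := horth _ hw
  simp only [map_inv₀, Complex.conj_conj, sub_inv_zpow_neg_two_mul hu0, mul_assoc,
    integral_const_mul] at h
  simpa [kernelMoment, conjKernel, pow_ne_zero _ hu0] using h

theorem hasDerivAt_kernelMoment (hg : IntegrableOn g (ball 0 1) μ) (m j : ℕ) {u₀ : ℂ}
    (hu₀ : ‖u₀‖ < 1) :
    HasDerivAt (kernelMoment μ g m j) ((m + j : ℕ) * kernelMoment μ g m (j + 1) u₀) u₀ := by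
  set ε := (1 - ‖u₀‖) / 2 with hε_def
  have hε : 0 < ε := half_pos (sub_pos.mpr hu₀)
  have hnear : ∀ u ∈ ball u₀ ε, ‖u‖ ≤ 1 - ε := fun u hu => by
    rw [mem_ball, dist_eq_norm] at hu
    linarith [norm_le_norm_add_norm_sub' u u₀]
  have hnear' : ∀ u ∈ ball u₀ ε, ‖u‖ < 1 := fun u hu => by linarith [hnear u hu]
  have key := hasDerivAt_integral_of_dominated_loc_of_deriv_le (μ := μ.restrict (ball 0 1))
    (F := fun u z => conjKernel m j u z * g z)
    (F' := fun u z => (m + j : ℕ) * conjKernel m (j + 1) u z * g z)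
    (bound := fun z => (m + j : ℕ) * (ε ^ (-((m + (j + 1) : ℕ) : ℤ)) * ‖g z‖))
    (ball_mem_nhds u₀ hε)
    (eventually_of_mem (ball_mem_nhds u₀ hε) fun u hu =>
      (integrableOn_conjKernel_mul hg m j (hnear' u hu)).aestronglyMeasurable)
    (integrableOn_conjKernel_mul hg m j hu₀)
    (by simpa only [mul_assoc] using
      ((integrableOn_conjKernel_mul hg m (j + 1) hu₀).const_mul _).aestronglyMeasurable)
    ?bound (hg.norm.const_mul _ |>.const_mul _) ?deriv
  case bound =>
    filter_upwards [ae_restrict_mem measurableSet_ball] with z hz u hu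
    rw [mul_assoc, norm_mul, norm_mul, Complex.norm_natCast]
    gcongr
    exact norm_conjKernel_le (mem_ball_zero_iff.mp hz).le hε (hnear u hu)
  case deriv =>
    filter_upwards [ae_restrict_mem measurableSet_ball] with z hz u hu
    have hne : 1 - conj z * u ≠ 0 := norm_pos_iff.mp <| hε.trans_le <| by
      linarith [one_sub_norm_le_norm_one_sub_conj_mul (mem_ball_zero_iff.mp hz).le u, hnear u hu]
    exact (hasDerivAt_conjKernel m j hne).mul_const (g z)
  have hderiv := key.2
  simp only [mul_assoc, integral_const_mul] at hderiv
  exact hderiv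

theorem kernelMoment_eq_zero (hg : IntegrableOn g (ball 0 1) μ) {m : ℕ} (hm : m ≠ 0)
    (h0 : ∀ u ∈ ball (0 : ℂ) 1, u ≠ 0 → kernelMoment μ g m 0 u = 0) (j : ℕ) :
    ∀ u ∈ ball (0 : ℂ) 1, kernelMoment μ g m j u = 0 := by
  induction j with
  | zero =>
    intro u hu
    rcases eq_or_ne u 0 with rfl | hu0
    · have hcont := (hasDerivAt_kernelMoment hg m 0 (norm_zero.trans_lt one_pos)).continuousAt
      have hpunct : kernelMoment μ g m 0 =ᶠ[𝓝[≠] 0] fun _ => 0 := by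
        filter_upwards [mem_nhdsWithin_of_mem_nhds (ball_mem_nhds (0 : ℂ) one_pos),
          self_mem_nhdsWithin] with v hv hv0 using h0 v hv hv0
      exact tendsto_nhds_unique (hcont.tendsto.mono_left nhdsWithin_le_nhds)
        (tendsto_const_nhds.congr' hpunct.symm)
    · exact h0 u hu hu0
  | succ j ih =>
    intro u hu
    have hderiv := (hasDerivAt_kernelMoment hg m j (mem_ball_zero_iff.mp hu)).deriv
    have hlocal : kernelMoment μ g m j =ᶠ[𝓝 u] fun _ => 0 :=
      eventually_of_mem (isOpen_ball.mem_nhds hu) ih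
    rw [hlocal.deriv_eq, deriv_const] at hderiv
    exact (mul_eq_zero.mp hderiv.symm).resolve_left (Nat.cast_ne_zero.mpr (by omega))

theorem setIntegral_conj_pow_mul_eq_zero (hg : IntegrableOn g (ball 0 1) μ) {m : ℕ} (hm : m ≠ 0)
    (h0 : ∀ u ∈ ball (0 : ℂ) 1, u ≠ 0 → kernelMoment μ g m 0 u = 0) (j : ℕ) :
    ∫ z in ball 0 1, conj z ^ j * g z ∂μ = 0 := by
  simpa [kernelMoment, conjKernel] using kernelMoment_eq_zero hg hm h0 j 0 (mem_ball_self one_pos)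

end kernelMoment

theorem integrableOn_polarCoord_symm {E : Type*} [NormedAddCommGroup E] [NormedSpace ℝ E]
    {g : ℂ → E} (hg : Integrable g) :
    IntegrableOn (fun p : ℝ × ℝ => p.1 • g (Complex.polarCoord.symm p)) polarCoord.target := by
  have hg' : Integrable (g ∘ measurableEquivRealProd.symm) :=
    (volume_preserving_equiv_real_prod.symm.integrable_comp_emb
      measurableEquivRealProd.symm.measurableEmbedding).mpr hg
  have := (integrableOn_image_iff_integrableOn_abs_det_fderiv_smul volume
    polarCoord.open_target.measurableSet
    (fun p _ => (hasFDerivAt_polarCoord_symm p).hasFDerivWithinAt) polarCoord.symm.injOn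
    (g ∘ measurableEquivRealProd.symm)).mp (by
      rw [polarCoord.symm_image_target_eq_source]; exact hg'.integrableOn)
  refine this.congr_fun (fun p hp => ?_) polarCoord.open_target.measurableSet
  simp only [det_fderivPolarCoordSymm, abs_of_pos (show 0 < p.1 from hp.1)]
  rfl

theorem setIntegral_Ioo_circleMap {E : Type*} [NormedAddCommGroup E] [NormedSpace ℝ E]
    (g : ℂ → E) (c : ℂ) (r : ℝ) :
    ∫ θ in Ioo (-π) π, g (circleMap c r θ) = (2 * π) • circleAverage g c r := by
  rw [circleAverage_eq_integral_add (-π), smul_inv_smul₀ (by positivity),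
    intervalIntegral.integral_comp_add_right (fun θ => g (circleMap c r θ)), zero_add,
    show 2 * π + -π = π by ring, intervalIntegral.integral_of_le (by linarith [pi_pos]),
    integral_Ioc_eq_integral_Ioo]

theorem setIntegral_ball_eq_integral_circleAverage {E : Type*} [NormedAddCommGroup E]
    [NormedSpace ℝ E] {g : ℂ → E} {R : ℝ} (hg : IntegrableOn g (ball 0 R)) :
    ∫ z in ball 0 R, g z = (2 * π) • ∫ r in Ioo 0 R, r • circleAverage g 0 r := by
  set G := (ball (0 : ℂ) R).indicator g
  have hG : Integrable G := (integrable_indicator_iff measurableSet_ball).mpr hg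
  have htarget : volume.restrict polarCoord.target =
      (volume.restrict (Ioi 0)).prod (volume.restrict (Ioo (-π) π)) := by
    rw [Measure.prod_restrict]; rfl
  have hpolar := integrableOn_polarCoord_symm hG
  rw [IntegrableOn, htarget] at hpolar
  have hslice : ∀ r ∈ Ioi (0 : ℝ), ∫ θ in Ioo (-π) π, r • G (Complex.polarCoord.symm (r, θ)) =
      (Ioo 0 R).indicator (fun r => (2 * π) • r • circleAverage g 0 r) r := by
    intro r hr
    have hsymm : ∀ θ, Complex.polarCoord.symm (r, θ) = circleMap 0 r θ := fun θ => by
      simp [circleMap, Complex.exp_mul_I, ← Complex.ofReal_cos, ← Complex.ofReal_sin]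
    by_cases hrR : r < R
    · have : ∀ θ, G (circleMap 0 r θ) = g (circleMap 0 r θ) := fun θ =>
        indicator_of_mem (by simp [abs_of_pos (mem_Ioi.mp hr), hrR]) g
      simp only [hsymm, this, integral_smul, setIntegral_Ioo_circleMap, indicator_of_mem
        (show r ∈ Ioo 0 R from ⟨hr, hrR⟩), smul_comm r]
    · have : ∀ θ, G (circleMap 0 r θ) = 0 := fun θ =>
        indicator_of_notMem (by simp [abs_of_pos (mem_Ioi.mp hr), hrR]) g
      simp [hsymm, this, hrR]
  rw [← integral_indicator measurableSet_ball, ← Complex.integral_comp_polarCoord_symm, htarget,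
    integral_prod _ hpolar, setIntegral_congr_fun measurableSet_Ioi hslice,
    setIntegral_indicator measurableSet_Ioo, inter_eq_self_of_subset_right Ioo_subset_Ioi_self,
    integral_smul]

theorem circleAverage_inv_pow_smul_eq_coeff {E : Type*} [NormedAddCommGroup E] [NormedSpace ℂ E]
    [CompleteSpace E] {f : ℂ → E} {p : FormalMultilinearSeries ℂ ℂ E} {c : ℂ} {R : ℝ}
    (hp : HasFPowerSeriesAt f p c) (hf : DifferentiableOn ℂ f (closedBall c R)) (hR : 0 < R)
    (j : ℕ) : circleAverage (fun z => (z - c)⁻¹ ^ j • f z) c R = p.coeff j := by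
  lift R to ℝ≥0 using hR.le
  have hcauchy : p = cauchyPowerSeries f c R :=
    hp.eq_formalMultilinearSeries (hf.hasFPowerSeriesOnBall hR).hasFPowerSeriesAt
  rw [circleAverage_eq_circleIntegral hR.ne', hcauchy, FormalMultilinearSeries.coeff,
    cauchyPowerSeries]
  simp only [ContinuousMultilinearMap.mkPiRing_apply, Pi.one_apply, Finset.prod_const_one, one_smul]
  simp_rw [smul_comm ((_ : ℂ) - c)⁻¹]

theorem conj_eq_norm_sq_mul_inv {z : ℂ} (hz : z ≠ 0) : conj z = ‖z‖ ^ 2 * z⁻¹ := by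
  rw [← Complex.conj_mul', mul_assoc, mul_inv_cancel₀ hz, mul_one]

theorem setIntegral_ball_radial_mul_conj_pow_mul {f : ℂ → ℂ} {p : FormalMultilinearSeries ℂ ℂ ℂ}
    {R : ℝ} (hf : DifferentiableOn ℂ f (ball 0 R)) (hp : HasFPowerSeriesAt f p 0) (ρ : ℝ → ℝ)
    (j : ℕ) (hint : IntegrableOn (fun z => conj z ^ j * ((ρ ‖z‖ : ℂ) * f z)) (ball 0 R)) :
    ∫ z in ball 0 R, conj z ^ j * ((ρ ‖z‖ : ℂ) * f z) =
      2 * π * (∫ r in Ioo 0 R, r ^ (2 * j + 1) * ρ r) * p.coeff j := by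
  have hcircle : ∀ r ∈ Ioo 0 R,
      r • circleAverage (fun z => conj z ^ j * ((ρ ‖z‖ : ℂ) * f z)) 0 r =
        ((r ^ (2 * j + 1) * ρ r : ℝ) : ℂ) * p.coeff j := by
    intro r ⟨hr0, hrR⟩
    -- on the circle `|z| = r` we have `conj z = r² / z`, turning the average into a Cauchy integral
    have hsphere : EqOn (fun z => conj z ^ j * ((ρ ‖z‖ : ℂ) * f z))
        (fun z => ((ρ r * r ^ (2 * j) : ℝ) : ℂ) • ((z - 0)⁻¹ ^ j • f z)) (sphere 0 |r|) := by
      intro z hz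
      rw [mem_sphere_zero_iff_norm, abs_of_pos hr0] at hz
      have hz0 : z ≠ 0 := norm_pos_iff.mp (hz ▸ hr0)
      simp only [conj_eq_norm_sq_mul_inv hz0, hz, sub_zero, smul_eq_mul]
      push_cast
      ring
    rw [circleAverage_congr_sphere hsphere, circleAverage_fun_smul,
      circleAverage_inv_pow_smul_eq_coeff hp (hf.mono (closedBall_subset_ball hrR)) hr0,
      Complex.real_smul, smul_eq_mul]
    push_cast
    ring
  rw [setIntegral_ball_eq_integral_circleAverage hint,
    setIntegral_congr_fun measurableSet_Ioo hcircle, integral_mul_const, integral_complex_ofReal,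
    Complex.real_smul]
  push_cast
  ring

theorem integral_pow_mul_one_sub_sq_pow_pos (j k : ℕ) :
    0 < ∫ r in Ioo (0 : ℝ) 1, r ^ j * (1 - r ^ 2) ^ k := by
  rw [← integral_Ioc_eq_integral_Ioo, ← intervalIntegral.integral_of_le zero_le_one]
  refine intervalIntegral.intervalIntegral_pos_of_pos_on
    (Continuous.intervalIntegrable (by fun_prop) _ _) (fun r ⟨hr0, hr1⟩ => ?_) one_pos
  have : 0 < 1 - r ^ 2 := by nlinarith
  positivity

theorem HasFPowerSeriesAt.coeff_eq_zero_of_moment_eq_zero {f : ℂ → ℂ}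
    {p : FormalMultilinearSeries ℂ ℂ ℂ} (hp : HasFPowerSeriesAt f p 0)
    (hf : DifferentiableOn ℂ f (ball 0 1)) (k j : ℕ)
    (hint : IntegrableOn (fun z => conj z ^ j * ((((1 - ‖z‖ ^ 2) ^ k : ℝ) : ℂ) * f z)) (ball 0 1))
    (hmoment : ∫ z in ball 0 1, conj z ^ j * ((((1 - ‖z‖ ^ 2) ^ k : ℝ) : ℂ) * f z) = 0) :
    p.coeff j = 0 := by
  rw [setIntegral_ball_radial_mul_conj_pow_mul hf hp (fun r => (1 - r ^ 2) ^ k) j hint] at hmoment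
  have hradial := integral_pow_mul_one_sub_sq_pow_pos (2 * j + 1) k
  refine (mul_eq_zero.mp hmoment).resolve_left ?_
  exact_mod_cast (mul_pos two_pi_pos hradial).ne'

theorem AnalyticOnNhd.eqOn_zero_of_coeff_eq_zero {E : Type*} [NormedAddCommGroup E]
    [NormedSpace ℂ E] {f : ℂ → E} {p : FormalMultilinearSeries ℂ ℂ E} {U : Set ℂ} {c : ℂ}
    (hf : AnalyticOnNhd ℂ f U) (hU : IsPreconnected U) (hc : c ∈ U)
    (hp : HasFPowerSeriesAt f p c) (hcoeff : ∀ j, p.coeff j = 0) : EqOn f 0 U := by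
  have hp0 : p = 0 := FormalMultilinearSeries.ext fun j =>
    FormalMultilinearSeries.coeff_eq_zero.mp (hcoeff j)
  exact hf.eqOn_zero_of_preconnected_of_eventuallyEq_zero hU hc (hp0 ▸ hp).eventually_eq_zero

/-- If `f` is in the weighted Bergman space on the unit disk and is orthogonal to every
coherent state `(z−w)^{−2n}`, `|w| > 1`, then `f` is identically zero. Equivalently,
the span of the coherent states is dense in the weighted Bergman space. -/
theorem coherent_states_dense (n : ℕ) (hn : 1 ≤ n) (f : ℂ → ℂ)
    (hf : DifferentiableOn ℂ f (Metric.ball (0 : ℂ) 1))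
    (hL2 : (∫⁻ z in Metric.ball (0 : ℂ) 1,
        ENNReal.ofReal ((1 - ‖z‖ ^ 2) ^ (2 * n - 2)) * (‖f z‖₊ : ℝ≥0∞) ^ 2) < ⊤)
    (horth : ∀ w : ℂ, 1 < ‖w‖ →
      (∫ z in Metric.ball (0 : ℂ) 1,
        ((1 - ‖z‖ ^ 2 : ℝ) : ℂ) ^ (2 * n - 2) *
          ((starRingEnd ℂ) z - (starRingEnd ℂ) w) ^ (-(2 * n : ℤ)) * f z) = 0) :
    ∀ z ∈ Metric.ball (0 : ℂ) 1, f z = 0 := by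
  set g : ℂ → ℂ := fun z => (((1 - ‖z‖ ^ 2) ^ (2 * n - 2) : ℝ) : ℂ) * f z
  have hg : IntegrableOn g (ball 0 1) := integrableOn_one_sub_norm_sq_pow_mul hf.continuousOn _ hL2
  have hpunct : ∀ u ∈ ball (0 : ℂ) 1, u ≠ 0 → kernelMoment volume g (2 * n) 0 u = 0 :=
    fun u hu hu0 => kernelMoment_zero_eq_zero_of_orthogonal (fun w hw =>
      (integral_congr_ae (ae_of_all _ fun z => by simp only [g]; push_cast; ring)).trans
        (horth w hw)) hu hu0
  have hmoment := setIntegral_conj_pow_mul_eq_zero hg (by omega) hpunct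
  obtain ⟨p, hp⟩ := hf.analyticAt (ball_mem_nhds 0 one_pos)
  exact (hf.analyticOnNhd isOpen_ball).eqOn_zero_of_coeff_eq_zero (convex_ball 0 1).isPreconnected
    (mem_ball_self one_pos) hp fun j =>
      hp.coeff_eq_zero_of_moment_eq_zero hf _ j (integrableOn_conj_pow_mul hg j) (hmoment j)
end

section
/- Let p ≥ 1 be an integer and define the s-channel conformal block 𝒢_p(z) = Σ_{m=0}^∞ ((p)_m)²/((2p)_m · m!) · z^{p+m}. Then this power series converges absolutely for every z ∈ ℂ with |z| < 1, and on the unit disk 𝒢_p satisfies the Casimir differential equation z²(1−z)·𝒢_p''(z) − z²·𝒢_p'(z) = p(p−1)·𝒢_p(z). (This is the statement that 𝒢_Δ(z) = z^Δ · ₂F₁(Δ,Δ;2Δ;z) solves the Casimir equation.) -/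
/-!
Write `𝒢_p(z) = ∑ gₙ zⁿ`, where `g_{p+m} = c_m` is the `m`-th coefficient of the block
and `gₙ = 0` for `n < p`. These coefficients grow polynomially, so the series can be
differentiated termwise on the unit disk, with `z 𝒢' = ∑ n gₙ zⁿ` and
`z² 𝒢'' = ∑ n(n-1) gₙ zⁿ`. The Casimir equation then becomes the coefficient recurrence
`((n+1)n - p(p-1)) g_{n+1} = n² gₙ`, which for `n = p + m` is the Pochhammer identity
`(m+1)(2p+m) c_{m+1} = (p+m)² c_m`.
-/

/-- The s-channel conformal block
`𝒢_p(z) = Σ_{m=0}^∞ ((p)_m)²/((2p)_m · m!) · z^{p+m} = z^p ₂F₁(p,p;2p;z)`. -/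
noncomputable def Gblock (p : ℕ) (z : ℂ) : ℂ :=
  ∑' m : ℕ,
    ((ascPochhammer ℂ m).eval (p : ℂ)) ^ 2 /
        ((ascPochhammer ℂ m).eval ((2 * p : ℕ) : ℂ) * (m.factorial : ℂ)) * z ^ (p + m)

open Metric Nat

def HasPolyGrowth (a : ℕ → ℂ) : Prop :=
  ∃ C : ℝ, ∃ k : ℕ, ∀ n, ‖a n‖ ≤ C * ((n : ℝ) + 1) ^ k

namespace HasPolyGrowth

variable {a : ℕ → ℂ}

theorem summable_norm_mul_pow (ha : HasPolyGrowth a) {r : ℝ} (hr0 : 0 ≤ r) (hr1 : r < 1) :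
    Summable fun n => ‖a n‖ * r ^ n := by
  obtain ⟨C, k, hC⟩ := ha
  have hr : ‖r‖ < 1 := by rwa [Real.norm_of_nonneg hr0]
  have hbound : Summable fun n : ℕ => C * 2 ^ (k - 1) * ((n : ℝ) ^ k * r ^ n + r ^ n) :=
    ((summable_pow_mul_geometric_of_norm_lt_one k hr).add
      (summable_geometric_of_lt_one hr0 hr1)).mul_left _
  refine .of_nonneg_of_le (fun n => by positivity) (fun n => ?_) hbound
  have hC0 : 0 ≤ C := le_trans (norm_nonneg _) ((hC 0).trans_eq (by simp))
  calc ‖a n‖ * r ^ n ≤ C * ((n : ℝ) + 1) ^ k * r ^ n := by gcongr; exact hC n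
    _ ≤ C * (2 ^ (k - 1) * ((n : ℝ) ^ k + 1 ^ k)) * r ^ n := by
      gcongr; exact add_pow_le (by positivity) zero_le_one k
    _ = C * 2 ^ (k - 1) * ((n : ℝ) ^ k * r ^ n + r ^ n) := by ring

theorem summable_mul_pow (ha : HasPolyGrowth a) {z : ℂ} (hz : ‖z‖ < 1) :
    Summable fun n => a n * z ^ n :=
  .of_norm <| by
    simpa only [norm_mul, norm_pow] using ha.summable_norm_mul_pow (norm_nonneg z) hz

theorem natCast_mul (ha : HasPolyGrowth a) : HasPolyGrowth fun n => n * a n := by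
  obtain ⟨C, k, hC⟩ := ha
  refine ⟨C, k + 1, fun n => ?_⟩
  rw [norm_mul, Complex.norm_natCast, pow_succ]
  nlinarith [hC n, norm_nonneg (a n), pow_nonneg (by positivity : (0 : ℝ) ≤ n + 1) k]

theorem comp_add_one (ha : HasPolyGrowth a) : HasPolyGrowth fun n => a (n + 1) := by
  obtain ⟨C, k, hC⟩ := ha
  refine ⟨C * 2 ^ k, k, fun n => ?_⟩
  have hC0 : 0 ≤ C := le_trans (norm_nonneg _) ((hC 0).trans_eq (by simp))
  calc ‖a (n + 1)‖ ≤ C * (((n + 1 : ℕ) : ℝ) + 1) ^ k := hC _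
    _ ≤ C * (2 * ((n : ℝ) + 1)) ^ k := by gcongr; push_cast; linarith
    _ = C * 2 ^ k * ((n : ℝ) + 1) ^ k := by rw [mul_pow]; ring

theorem derivCoeff (ha : HasPolyGrowth a) :
    HasPolyGrowth fun n => ((n + 1 : ℕ) : ℂ) * a (n + 1) :=
  ha.natCast_mul.comp_add_one

theorem hasDerivAt_tsum (ha : HasPolyGrowth a) {z : ℂ} (hz : ‖z‖ < 1) :
    HasDerivAt (fun w => ∑' n, a n * w ^ n)
      (∑' n, ((n + 1 : ℕ) : ℂ) * a (n + 1) * z ^ n) z := by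
  obtain ⟨r, hzr, hr1⟩ := exists_between hz
  have hr0 : 0 < r := (norm_nonneg z).trans_lt hzr
  have hu : Summable fun n => ‖a n‖ * n * r ^ (n - 1) := by
    refine (summable_nat_add_iff 1).1
      ((ha.derivCoeff.summable_norm_mul_pow hr0.le hr1).congr fun n => ?_)
    rw [norm_mul, Complex.norm_natCast, Nat.add_sub_cancel]
    ring
  refine (hasDerivAt_tsum_of_isPreconnected hu isOpen_ball
    (convex_ball (0 : ℂ) r).isPreconnected
    (fun n w _ => (hasDerivAt_pow n w).const_mul (a n))
    (fun n w hw => ?_) (mem_ball_self hr0) (ha.summable_mul_pow (by simp))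
    (mem_ball_zero_iff.2 hzr)).congr_deriv ?_
  · rw [mem_ball_zero_iff] at hw
    rw [norm_mul, norm_mul, norm_pow, Complex.norm_natCast, mul_assoc]
    gcongr
  · rw [tsum_eq_zero_add' ((ha.derivCoeff.summable_mul_pow hz).congr fun n => ?_)]
    · simp only [Nat.cast_zero, zero_mul, mul_zero, zero_add]
      exact tsum_congr fun n => by rw [Nat.add_sub_cancel]; ring
    · rw [Nat.add_sub_cancel]
      ring

theorem mul_deriv_tsum (ha : HasPolyGrowth a) {z : ℂ} (hz : ‖z‖ < 1) :
    z * deriv (fun w => ∑' n, a n * w ^ n) z = ∑' n, n * a n * z ^ n := by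
  rw [(ha.hasDerivAt_tsum hz).deriv, ← tsum_mul_left,
    (ha.natCast_mul.summable_mul_pow hz).tsum_eq_zero_add]
  simp only [Nat.cast_zero, zero_mul, zero_add]
  exact tsum_congr fun n => by ring

theorem sq_mul_deriv_deriv_tsum (ha : HasPolyGrowth a) {z : ℂ} (hz : ‖z‖ < 1) :
    z ^ 2 * deriv (deriv fun w => ∑' n, a n * w ^ n) z =
      ∑' n, n * (n - 1) * a n * z ^ n := by
  have hderiv : deriv (fun w => ∑' n, a n * w ^ n) =ᶠ[nhds z]
      fun w => ∑' n, ((n + 1 : ℕ) : ℂ) * a (n + 1) * w ^ n := by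
    filter_upwards [isOpen_ball.mem_nhds (mem_ball_zero_iff.2 hz)] with w hw
    exact (ha.hasDerivAt_tsum (mem_ball_zero_iff.1 hw)).deriv
  have hshift : Summable fun n =>
      ((n + 1 : ℕ) : ℂ) * (((n + 1 : ℕ) : ℂ) - 1) * a (n + 1) * z ^ (n + 1) := by
    refine ((ha.derivCoeff.natCast_mul.summable_mul_pow hz).mul_left z).congr fun n => ?_
    push_cast
    ring
  rw [hderiv.deriv_eq, sq, mul_assoc, ha.derivCoeff.mul_deriv_tsum hz, ← tsum_mul_left,
    tsum_eq_zero_add' (f := fun n => (n : ℂ) * (n - 1) * a n * z ^ n) hshift]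
  simp only [Nat.cast_zero, zero_mul, zero_add]
  exact tsum_congr fun n => by push_cast; ring

theorem casimir_tsum_of_recurrence (ha : HasPolyGrowth a) (c : ℂ)
    (hrec : ∀ n : ℕ, (((n : ℂ) + 1) * n - c) * a (n + 1) = n ^ 2 * a n) (h0 : c * a 0 = 0)
    {z : ℂ} (hz : ‖z‖ < 1) :
    z ^ 2 * (1 - z) * deriv (deriv fun w => ∑' n, a n * w ^ n) z -
        z ^ 2 * deriv (fun w => ∑' n, a n * w ^ n) z =
      c * ∑' n, a n * z ^ n := by
  have hs0 := ha.summable_mul_pow hz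
  have hs1 := ha.natCast_mul.summable_mul_pow hz
  have hs2 : Summable fun n : ℕ => (n : ℂ) * (n - 1) * a n * z ^ n :=
    ((ha.natCast_mul.natCast_mul.summable_mul_pow hz).sub hs1).congr fun n => by ring
  -- By `hrec`, `e (n + 1) = n² a n`; hence `z² f'' - c f` and `z (z² f'' + z f')` both equal
  -- `∑ e n zⁿ`, the latter because `e 0 = 0`.
  set e : ℕ → ℂ := fun n => ((n : ℂ) * (n - 1) - c) * a n
  have he : ∀ n, e (n + 1) * z ^ (n + 1) =
      z * ((n : ℂ) * (n - 1) * a n * z ^ n + n * a n * z ^ n) := by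
    intro n
    simp only [e]
    push_cast
    linear_combination z ^ (n + 1) * hrec n
  have hT : ∑' n : ℕ, (n : ℂ) * (n - 1) * a n * z ^ n - c * ∑' n, a n * z ^ n =
      ∑' n, e n * z ^ n := by
    rw [← tsum_mul_left, ← hs2.tsum_sub (hs0.mul_left c)]
    exact tsum_congr fun n => by ring
  have hzT : z * (∑' n : ℕ, (n : ℂ) * (n - 1) * a n * z ^ n + ∑' n : ℕ, n * a n * z ^ n) =
      ∑' n, e n * z ^ n := by
    rw [tsum_eq_zero_add' (f := fun n => e n * z ^ n)
      (((hs2.add hs1).mul_left z).congr fun n => (he n).symm)]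
    have he0 : e 0 = 0 := by simp [e, h0]
    rw [he0, zero_mul, zero_add, tsum_congr he, tsum_mul_left, hs2.tsum_add hs1]
  linear_combination (1 - z) * ha.sq_mul_deriv_deriv_tsum hz - z * ha.mul_deriv_tsum hz + hT - hzT

end HasPolyGrowth

theorem Nat.ascFactorial_pos_of_pos {n : ℕ} (hn : 0 < n) (k : ℕ) : 0 < n.ascFactorial k :=
  (pow_pos hn k).trans_le (Nat.pow_succ_le_ascFactorial n k)

theorem Nat.succ_ascFactorial_le_factorial_mul_pow (q m : ℕ) :
    (q + 1).ascFactorial m ≤ m ! * (q + m) ^ q := by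
  rw [Nat.ascFactorial_eq_factorial_mul_choose, add_comm q m, Nat.choose_symm_add]
  exact Nat.mul_le_mul_left _ (Nat.choose_le_pow _ _)

noncomputable def blockCoeff (p m : ℕ) : ℂ :=
  ((ascPochhammer ℂ m).eval (p : ℂ)) ^ 2 /
    ((ascPochhammer ℂ m).eval ((2 * p : ℕ) : ℂ) * (m.factorial : ℂ))

theorem blockCoeff_eq_ascFactorial (p m : ℕ) :
    blockCoeff p m =
      ((p.ascFactorial m : ℕ) : ℂ) ^ 2 / (((2 * p).ascFactorial m : ℕ) * m ! : ℂ) := by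
  simp only [blockCoeff, ← ascPochhammer_eval_cast, ascPochhammer_nat_eq_ascFactorial]

theorem norm_blockCoeff_le {p : ℕ} (hp : 1 ≤ p) (m : ℕ) :
    ‖blockCoeff p m‖ ≤ ((p + m : ℕ) : ℝ) ^ p := by
  obtain ⟨q, rfl⟩ := Nat.exists_eq_add_of_le' hp
  have hden : 0 < (2 * (q + 1)).ascFactorial m * m ! :=
    Nat.mul_pos (Nat.ascFactorial_pos_of_pos (by omega) m) m.factorial_pos
  have hnum : ((q + 1).ascFactorial m) ^ 2 ≤
      (q + 1 + m) ^ (q + 1) * ((2 * (q + 1)).ascFactorial m * m !) :=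
    calc ((q + 1).ascFactorial m) ^ 2
        ≤ (2 * (q + 1)).ascFactorial m * (m ! * (q + m) ^ q) := by
          rw [sq]
          exact Nat.mul_le_mul (Nat.ascFactorial_le m (by omega))
            (Nat.succ_ascFactorial_le_factorial_mul_pow q m)
      _ ≤ (2 * (q + 1)).ascFactorial m * (m ! * (q + 1 + m) ^ (q + 1)) := by
          gcongr <;> omega
      _ = (q + 1 + m) ^ (q + 1) * ((2 * (q + 1)).ascFactorial m * m !) := by ring
  rw [blockCoeff_eq_ascFactorial, norm_div, norm_pow, ← Nat.cast_mul, Complex.norm_natCast,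
    Complex.norm_natCast, div_le_iff₀ (by exact_mod_cast hden)]
  exact_mod_cast hnum

theorem blockCoeff_succ {p : ℕ} (hp : 1 ≤ p) (m : ℕ) :
    blockCoeff p (m + 1) * ((m + 1) * (2 * p + m)) = blockCoeff p m * (p + m) ^ 2 := by
  have hB : (((2 * p).ascFactorial m : ℕ) : ℂ) ≠ 0 :=
    Nat.cast_ne_zero.2 (Nat.ascFactorial_pos_of_pos (by omega) m).ne'
  have h2p : (2 * p + m : ℂ) ≠ 0 := by exact_mod_cast (by omega : 2 * p + m ≠ 0)
  have hm : (m + 1 : ℂ) ≠ 0 := by exact_mod_cast m.succ_ne_zero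
  rw [blockCoeff_eq_ascFactorial, blockCoeff_eq_ascFactorial, Nat.ascFactorial_succ,
    Nat.ascFactorial_succ, Nat.factorial_succ]
  push_cast at hB ⊢
  rw [div_mul_eq_mul_div, div_mul_eq_mul_div,
    div_eq_div_iff (by simp [hB, h2p, hm, m.factorial_ne_zero])
      (by simp [hB, m.factorial_ne_zero])]
  ring

noncomputable def blockTaylorCoeff (p n : ℕ) : ℂ :=
  if p ≤ n then blockCoeff p (n - p) else 0

theorem blockTaylorCoeff_add (p m : ℕ) : blockTaylorCoeff p (m + p) = blockCoeff p m := by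
  rw [blockTaylorCoeff, if_pos (Nat.le_add_left p m), Nat.add_sub_cancel]

theorem blockTaylorCoeff_of_lt {p n : ℕ} (h : n < p) : blockTaylorCoeff p n = 0 :=
  if_neg (Nat.not_le.2 h)

theorem Gblock_eq_tsum (p : ℕ) : Gblock p = fun z => ∑' n, blockTaylorCoeff p n * z ^ n := by
  funext z
  rw [← (add_left_injective p).tsum_eq fun n hn => ?_]
  · exact tsum_congr fun m => by rw [blockTaylorCoeff_add, add_comm m p]; rfl
  · by_cases hpn : p ≤ n
    · exact ⟨n - p, Nat.sub_add_cancel hpn⟩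
    · simp [blockTaylorCoeff_of_lt (Nat.not_le.1 hpn)] at hn

theorem blockTaylorCoeff_hasPolyGrowth {p : ℕ} (hp : 1 ≤ p) :
    HasPolyGrowth (blockTaylorCoeff p) := by
  refine ⟨1, p, fun n => ?_⟩
  rw [one_mul]
  rcases Nat.lt_or_ge n p with hn | hn
  · rw [blockTaylorCoeff_of_lt hn, norm_zero]
    positivity
  · obtain ⟨m, rfl⟩ := Nat.exists_eq_add_of_le' hn
    calc ‖blockTaylorCoeff p (m + p)‖ ≤ ((p + m : ℕ) : ℝ) ^ p := by
          rw [blockTaylorCoeff_add]; exact norm_blockCoeff_le hp m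
      _ ≤ (((m + p : ℕ) : ℝ) + 1) ^ p := by gcongr; rw [add_comm]; linarith

theorem blockTaylorCoeff_recurrence {p : ℕ} (hp : 1 ≤ p) (n : ℕ) :
    (((n : ℂ) + 1) * n - p * (p - 1)) * blockTaylorCoeff p (n + 1) =
      n ^ 2 * blockTaylorCoeff p n := by
  rcases Nat.lt_or_ge n p with hn | hn
  · rw [blockTaylorCoeff_of_lt hn, mul_zero]
    rcases (show n + 1 < p ∨ n + 1 = p by omega) with hn | rfl
    · rw [blockTaylorCoeff_of_lt hn, mul_zero]
    · push_cast; ring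
  · obtain ⟨m, rfl⟩ := Nat.exists_eq_add_of_le' hn
    rw [show m + p + 1 = (m + 1) + p by ring, blockTaylorCoeff_add, blockTaylorCoeff_add]
    push_cast
    linear_combination blockCoeff_succ hp m

/-- For every integer `p ≥ 1`, the power series defining `𝒢_p` converges absolutely on
the unit disk, and there `𝒢_p` satisfies the Casimir differential equation
`z²(1−z)·𝒢_p'' − z²·𝒢_p' = p(p−1)·𝒢_p`. -/
theorem sChannel_block_casimir (p : ℕ) (hp : 1 ≤ p) :
    (∀ z : ℂ, ‖z‖ < 1 → Summable fun m : ℕ =>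
      ‖((ascPochhammer ℂ m).eval (p : ℂ)) ^ 2 /
          ((ascPochhammer ℂ m).eval ((2 * p : ℕ) : ℂ) * (m.factorial : ℂ)) * z ^ (p + m)‖) ∧
    (∀ z : ℂ, ‖z‖ < 1 →
      z ^ 2 * (1 - z) * deriv (deriv (Gblock p)) z - z ^ 2 * deriv (Gblock p) z =
        (p : ℂ) * ((p : ℂ) - 1) * Gblock p z) := by
  have hg := blockTaylorCoeff_hasPolyGrowth hp
  refine ⟨fun z hz => ?_, fun z hz => ?_⟩
  · refine ((hg.summable_mul_pow hz).norm.comp_injective (add_left_injective p)).congr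
      fun m => ?_
    rw [Function.comp_apply, blockTaylorCoeff_add, add_comm m p]
    rfl
  · rw [Gblock_eq_tsum]
    exact hg.casimir_tsum_of_recurrence _ (blockTaylorCoeff_recurrence hp)
      (by rw [blockTaylorCoeff_of_lt hp, mul_zero]) hz
end

section
/- For all integers p, q with 1 ≤ q ≤ p, the rational number Σ_{j+m = p−q, j,m ≥ 0} ((1−p)_j)² ((q)_m)² / ((2−2p)_j · j! · (2q)_m · m!) equals 1 if p = q and equals 0 if q < p. (This is the orthogonality relation (1/2πi)∮ dz z^{−2} 𝒢_{1−p}(z) 𝒢_q(z) = δ_{p,q} for the hypergeometric blocks 𝒢_Δ(z) = z^Δ ₂F₁(Δ,Δ;2Δ;z), expressed as the vanishing of the coefficient-extraction sum.) -/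
/-!
Write `n = p - q` and let `T j` be the `j`-th summand, viewed as a function of `a = q`. Since
`(1 - p)_(j+1) / (1 - p)_j = -((q)_(n-j) / (q)_(n-j-1))`, the squared factors cancel in
`T (j+1) / T j`, which is a rational function of degree two in `j`. Gosper's algorithm then
produces the closed form `n (2a + n - 1) Σ_{j ≤ k} T j = (n - k) (2a + n - 1 - k) T k`, and the
factor `n - k` kills the full sum `k = n` as soon as `n > 0`.
-/

open Finset Nat

section Field

variable {K : Type*} [Field K] [CharZero K]

noncomputable def blockTerm (a : K) (n j : ℕ) : K :=
  (ascPochhammer K j).eval (1 - (a + n)) ^ 2 * (ascPochhammer K (n - j)).eval a ^ 2 /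
    ((ascPochhammer K j).eval (2 - 2 * (a + n)) * j ! *
      (ascPochhammer K (n - j)).eval (2 * a) * (n - j)!)

theorem blockTerm_succ (a : K) (k m : ℕ) (h₁ : 2 * a + m ≠ 0) (h₂ : 2 * a + 2 * m + k ≠ 0) :
    (2 * a + 2 * m + k) * (k + 1) * blockTerm a (k + m + 1) (k + 1) =
      -((2 * a + m) * (m + 1)) * blockTerm a (k + m + 1) k := by
  unfold blockTerm
  rw [show k + m + 1 - (k + 1) = m by omega, show k + m + 1 - k = m + 1 by omega]
  simp only [ascPochhammer_succ_eval, factorial_succ, cast_mul, cast_add, cast_one]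
  rw [show 1 - (a + (k + m + 1)) + k = -(a + m) by ring,
    show 2 - 2 * (a + (k + m + 1)) + k = -(2 * a + 2 * m + k) by ring]
  have h₂' : 2 * (a + m) + k ≠ 0 := by rwa [mul_add]
  field_simp

end Field

section OrderedField

variable {K : Type*} [Field K] [LinearOrder K] [IsStrictOrderedRing K] {a : K}

theorem mul_sum_range_blockTerm (ha : 0 < a) {n k : ℕ} (hk : k ≤ n) :
    n * (2 * a + n - 1) * ∑ j ∈ range (k + 1), blockTerm a n j =
      (n - k) * (2 * a + n - 1 - k) * blockTerm a n k := by
  induction k with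
  | zero => simp
  | succ k ih =>
    obtain ⟨m, rfl⟩ : ∃ m, n = k + m + 1 := ⟨n - k - 1, by omega⟩
    have hrec := blockTerm_succ a k m (by positivity) (by positivity)
    rw [sum_range_succ, mul_add, ih (by omega)]
    push_cast
    linear_combination hrec

theorem sum_range_blockTerm (ha : 0 < a) {n : ℕ} (hn : 0 < n) :
    ∑ j ∈ range (n + 1), blockTerm a n j = 0 := by
  have hfactor : (n : K) * (2 * a + n - 1) ≠ 0 := by
    have : (1 : K) ≤ n := by exact_mod_cast hn
    apply mul_ne_zero <;> [positivity; linarith]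
  have h := mul_sum_range_blockTerm ha (le_refl n)
  rw [sub_self, zero_mul, zero_mul] at h
  exact (mul_eq_zero.mp h).resolve_left hfactor

end OrderedField

/-- Orthogonality of the hypergeometric blocks `𝒢_Δ(z) = z^Δ ₂F₁(Δ,Δ;2Δ;z)`:
for `1 ≤ q ≤ p`, the coefficient-extraction sum
`Σ_{j+m=p−q} ((1−p)_j)²((q)_m)²/((2−2p)_j j! (2q)_m m!)` equals `δ_{p,q}`. -/
theorem block_orthogonality (p q : ℕ) (hq : 1 ≤ q) (hpq : q ≤ p) :
    (∑ j ∈ Finset.range (p - q + 1),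
        ((ascPochhammer ℚ j).eval (1 - (p : ℚ))) ^ 2 *
            ((ascPochhammer ℚ (p - q - j)).eval (q : ℚ)) ^ 2 /
          ((ascPochhammer ℚ j).eval (2 - 2 * (p : ℚ)) * (j.factorial : ℚ) *
            (ascPochhammer ℚ (p - q - j)).eval (2 * (q : ℚ)) *
            ((p - q - j).factorial : ℚ))) =
      if p = q then 1 else 0 := by
  split_ifs with h
  · subst h
    simp
  · have hp : (p : ℚ) = q + (p - q : ℕ) := by push_cast [hpq]; ring
    rw [hp]
    exact sum_range_blockTerm (by exact_mod_cast hq) (by omega)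
end

section
/- Let g ≥ 0 and r ≥ 0 be integers and k₁,…,k_r ≥ 2 be integers with negative orbifold Euler characteristic: 2 − 2g − Σ_{i=1}^r (k_i−1)/k_i < 0 (as rational numbers). Then there exists n ∈ {1, 2, 3, 4, 6} with ℓ_n ≥ 1, where ℓ_n = (2n−1)(g−1) + Σ_{i=1}^r ⌊n(k_i−1)/k_i⌋ + δ_{n,1}. (Every hyperbolic 2-orbifold admits a nonzero holomorphic modular form of weight 2n for some n ∈ {1,2,3,4,6}; in particular n_min ∈ {1,2,3,4,6}.) -/
/-!
For `k ≥ n ≥ 1` one has `⌊n(k-1)/k⌋ = n - 1`, so `ℓ₂ = 3(g-1) + r`, which is positive unless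
`3g + r ≤ 3`. Since every `(kᵢ-1)/kᵢ ≤ 1`, hyperbolicity forces `2g + r > 2`, so the only
remaining signatures are the triangle groups `[0; a, b, c]` with `1/a + 1/b + 1/c < 1`; there
`ℓₙ ≥ 1` amounts to `Σ ⌊n(kᵢ-1)/kᵢ⌋ ≥ 2n`. This holds for `n = 3` if all `kᵢ ≥ 3`; otherwise
some `kᵢ = 2`, and then `n = 4` works if the other two are `≥ 4`, while `[0; 2, 3, c]` forces
`c ≥ 7` and `n = 6` works.
-/

def ell (g r : ℕ) (k : Fin r → ℕ) (n : ℕ) : ℤ :=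
  (2 * (n : ℤ) - 1) * ((g : ℤ) - 1) +
    (∑ i, ⌊(n : ℚ) * ((k i : ℚ) - 1) / (k i : ℚ)⌋) + (if n = 1 then 1 else 0)

lemma Nat.mul_sub_one_div_of_le {n k : ℕ} (hn : 0 < n) (hnk : n ≤ k) :
    n * (k - 1) / k = n - 1 := by
  have hk : 1 ≤ k := hn.trans_le hnk
  apply Nat.div_eq_of_lt_le
  · zify [hn, hk]; nlinarith
  · zify [hn, hk]; nlinarith

-- No hypothesis on `k`: at `k = 0` both sides are `0` by the division-by-zero conventions.
lemma floor_natCast_mul_sub_one_div (n k : ℕ) :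
    ⌊(n : ℚ) * ((k : ℚ) - 1) / k⌋ = ((n * (k - 1) / k : ℕ) : ℤ) := by
  rcases Nat.eq_zero_or_pos k with rfl | hk
  · simp
  have hcast : (n : ℚ) * ((k : ℚ) - 1) = ((n * (k - 1) : ℕ) : ℚ) := by
    push_cast [Nat.cast_sub hk]; ring
  rw [hcast, Rat.floor_natCast_div_natCast, Int.natCast_div]

lemma ell_eq (g r : ℕ) (k : Fin r → ℕ) (n : ℕ) :
    ell g r k n = (2 * (n : ℤ) - 1) * ((g : ℤ) - 1) +
      (∑ i, ((n * (k i - 1) / k i : ℕ) : ℤ)) + (if n = 1 then 1 else 0) := by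
  simp only [ell, floor_natCast_mul_sub_one_div]

lemma ell_two {g r : ℕ} {k : Fin r → ℕ} (hk : ∀ i, 2 ≤ k i) :
    ell g r k 2 = 3 * ((g : ℤ) - 1) + r := by
  have hfloor : ∀ i, 2 * (k i - 1) / k i = 1 := fun i => Nat.mul_sub_one_div_of_le two_pos (hk i)
  simp only [ell_eq, hfloor, Finset.sum_const, Finset.card_univ, Fintype.card_fin]
  norm_num

lemma natCast_sub_one_div_le_one (k : ℕ) : ((k : ℚ) - 1) / k ≤ 1 := by
  rcases Nat.eq_zero_or_pos k with rfl | hk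
  · simp
  rw [div_le_one (by exact_mod_cast hk)]
  linarith

lemma two_lt_two_mul_add_of_euler_neg {g r : ℕ} {k : Fin r → ℕ}
    (hχ : (2 : ℚ) - 2 * (g : ℚ) - ∑ i, ((k i : ℚ) - 1) / (k i : ℚ) < 0) :
    2 < 2 * g + r := by
  have hsum : ∑ i, ((k i : ℚ) - 1) / (k i : ℚ) ≤ r := by
    simpa using Finset.sum_le_card_nsmul Finset.univ _ 1
      (fun i _ => natCast_sub_one_div_le_one (k i))
  exact_mod_cast (by linarith : (2 : ℚ) < 2 * g + r)

lemma mul_add_lt_of_euler_neg {a b c : ℕ} (ha : 0 < a) (hb : 0 < b) (hc : 0 < c)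
    (h : (2 : ℚ) - (((a : ℚ) - 1) / a + ((b : ℚ) - 1) / b + ((c : ℚ) - 1) / c) < 0) :
    a * b + b * c + c * a < a * b * c := by
  have ha' : (0 : ℚ) < a := by exact_mod_cast ha
  have hb' : (0 : ℚ) < b := by exact_mod_cast hb
  have hc' : (0 : ℚ) < c := by exact_mod_cast hc
  rw [sub_neg, div_add_div _ _ ha'.ne' hb'.ne', div_add_div _ _ (by positivity) hc'.ne',
    lt_div_iff₀ (by positivity)] at h
  exact_mod_cast (by linarith : (a * b + b * c + c * a : ℚ) < a * b * c)

lemma exists_le_sum_of_two {b c : ℕ} (h : 2 * (b + c) < b * c) :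
    ∃ n ∈ ({4, 6} : Finset ℕ),
      2 * n ≤ n * (2 - 1) / 2 + n * (b - 1) / b + n * (c - 1) / c := by
  wlog hbc : b ≤ c generalizing b c
  · obtain ⟨n, hn, hle⟩ := this (by linarith) (by omega : c ≤ b)
    exact ⟨n, hn, by omega⟩
  have hb : 3 ≤ b := by
    by_contra! hb
    nlinarith
  rcases hb.eq_or_lt with rfl | hb
  · have hc : 6 ≤ c := by omega
    refine ⟨6, by simp, ?_⟩
    rw [Nat.mul_sub_one_div_of_le (by norm_num) hc]
  · refine ⟨4, by simp, ?_⟩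
    rw [Nat.mul_sub_one_div_of_le (by norm_num) hb,
      Nat.mul_sub_one_div_of_le (by norm_num) (by omega : 4 ≤ c)]

lemma exists_le_sum_of_triangle {a b c : ℕ} (h : a * b + b * c + c * a < a * b * c) :
    ∃ n ∈ ({3, 4, 6} : Finset ℕ),
      2 * n ≤ n * (a - 1) / a + n * (b - 1) / b + n * (c - 1) / c := by
  wlog hab : a ≤ b generalizing a b c
  · obtain ⟨n, hn, hle⟩ := this (by linarith) (by omega : b ≤ a)
    exact ⟨n, hn, by omega⟩
  wlog hac : a ≤ c generalizing a b c
  · obtain ⟨n, hn, hle⟩ := this (by linarith) (by omega : c ≤ b) (by omega : c ≤ a)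
    exact ⟨n, hn, by omega⟩
  have ha : 2 ≤ a := by
    by_contra! ha
    have : a * b * c ≤ 1 * b * c := by gcongr; omega
    nlinarith
  rcases ha.eq_or_lt with rfl | ha
  · obtain ⟨n, hn, hle⟩ := exists_le_sum_of_two (by linarith : 2 * (b + c) < b * c)
    exact ⟨n, by simp at hn ⊢; omega, hle⟩
  · refine ⟨3, by simp, ?_⟩
    rw [Nat.mul_sub_one_div_of_le (by norm_num) ha,
      Nat.mul_sub_one_div_of_le (by norm_num) (by omega : 3 ≤ b),
      Nat.mul_sub_one_div_of_le (by norm_num) (by omega : 3 ≤ c)]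

/-- Every signature `[g; k₁,…,k_r]` with negative orbifold Euler characteristic admits
some `n ∈ {1, 2, 3, 4, 6}` with `ℓ_n ≥ 1`: every hyperbolic 2-orbifold admits a nonzero
holomorphic modular form of weight `2n` for some `n ∈ {1,2,3,4,6}`. -/
theorem nmin_mem_one_two_three_four_six (g r : ℕ) (k : Fin r → ℕ) (hk : ∀ i, 2 ≤ k i)
    (hχ : (2 : ℚ) - 2 * (g : ℚ) - ∑ i, ((k i : ℚ) - 1) / (k i : ℚ) < 0) :
    ∃ n ∈ ({1, 2, 3, 4, 6} : Finset ℕ), 1 ≤ ell g r k n := by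
  by_cases hlarge : 4 ≤ 3 * g + r
  · exact ⟨2, by simp, by rw [ell_two hk]; omega⟩
  have hgr := two_lt_two_mul_add_of_euler_neg hχ
  obtain ⟨rfl, rfl⟩ : g = 0 ∧ r = 3 := by omega
  simp only [Fin.sum_univ_three, Nat.cast_zero, mul_zero, sub_zero] at hχ
  have hpos : ∀ i, 0 < k i := fun i => by have := hk i; omega
  obtain ⟨n, hn, hle⟩ := exists_le_sum_of_triangle
    (mul_add_lt_of_euler_neg (hpos 0) (hpos 1) (hpos 2) hχ)
  simp only [Finset.mem_insert, Finset.mem_singleton] at hn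
  refine ⟨n, by simp only [Finset.mem_insert, Finset.mem_singleton]; omega, ?_⟩
  rw [ell_eq, Fin.sum_univ_three, if_neg (by omega)]
  omega
end

section
/- Let P be a polynomial with real coefficients, let n be an integer with n ≥ deg P, and write P = Σ_{i=0}^n p_i Xⁱ. Define the polynomial Q = Σ_{i=0}^n p_i Xⁱ(1−X)^{n−i} (so that Q(y) = (1−y)ⁿ P(y/(1−y)) for y ≠ 1). Then P(x) ≥ 0 for all real x ≥ 0 if and only if Q(y) ≥ 0 for all y ∈ [0,1]. -/
/-!
The substitution `y = x / (1 + x)` maps `[0, ∞)` bijectively onto `[0, 1)`, and there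
`Q(y) = (1 - y)ⁿ P(x)` with `(1 - y)ⁿ > 0`. So the two sign conditions agree on `[0, 1)`, and the
endpoint `y = 1` follows by continuity of `Q`.
-/

open Polynomial Finset Set

section

variable {K : Type*} [Field K] {P : K[X]} {n : ℕ}

theorem eval_sum_coeff_mul_X_pow_mul_one_sub_X_pow (hn : P.natDegree ≤ n) {t : K} (ht : t ≠ 1) :
    (∑ i ∈ range (n + 1), C (P.coeff i) * X ^ i * (1 - X) ^ (n - i)).eval t =
      (1 - t) ^ n * P.eval (t / (1 - t)) := by
  have ht' : 1 - t ≠ 0 := sub_ne_zero.mpr ht.symm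
  rw [eval_finsetSum, eval_eq_sum_range' (Nat.lt_succ_of_le hn), mul_sum]
  refine sum_congr rfl fun i hi => ?_
  simp only [eval_mul, eval_pow, eval_C, eval_X, eval_sub, eval_one]
  rw [div_pow, pow_sub₀ _ ht' (Nat.lt_succ_iff.mp (mem_range.mp hi))]
  field_simp

theorem eval_eq_one_add_pow_mul_eval_sum_coeff_mul_X_pow_mul_one_sub_X_pow (hn : P.natDegree ≤ n)
    {x : K} (hx : 1 + x ≠ 0) :
    P.eval x = (1 + x) ^ n *
      (∑ i ∈ range (n + 1), C (P.coeff i) * X ^ i * (1 - X) ^ (n - i)).eval (x / (1 + x)) := by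
  have h1 : 1 - x / (1 + x) = (1 + x)⁻¹ := by field_simp; ring
  have ht : x / (1 + x) ≠ 1 := fun h => inv_ne_zero hx (by rw [← h1, h, sub_self])
  rw [eval_sum_coeff_mul_X_pow_mul_one_sub_X_pow hn ht, h1, div_inv_eq_mul,
    div_mul_cancel₀ _ hx, ← mul_assoc, ← mul_pow, mul_inv_cancel₀ hx, one_pow, one_mul]

end

theorem nonneg_on_Icc_of_nonneg_on_Ico {f : ℝ → ℝ} (hf : Continuous f) {a b : ℝ} (hab : a ≠ b)
    (h : ∀ y ∈ Ico a b, 0 ≤ f y) : ∀ y ∈ Icc a b, 0 ≤ f y := by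
  rw [← closure_Ico hab]
  exact (isClosed_le continuous_const hf).closure_subset_iff.mpr h

/-- Let `P` be a real polynomial, `n ≥ deg P`, and let
`Q = Σ_{i=0}^n p_i Xⁱ(1−X)^{n−i}` (so `Q(y) = (1−y)ⁿ P(y/(1−y))` for `y ≠ 1`).
Then `P(x) ≥ 0` for all `x ≥ 0` if and only if `Q(y) ≥ 0` for all `y ∈ [0,1]`. -/
theorem nonneg_on_halfline_iff_nonneg_on_unit_interval (P : Polynomial ℝ) (n : ℕ)
    (hn : P.natDegree ≤ n) (Q : Polynomial ℝ)
    (hQ : Q = ∑ i ∈ Finset.range (n + 1),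
      Polynomial.C (P.coeff i) * Polynomial.X ^ i * (1 - Polynomial.X) ^ (n - i)) :
    (∀ x : ℝ, 0 ≤ x → 0 ≤ P.eval x) ↔ (∀ y ∈ Set.Icc (0 : ℝ) 1, 0 ≤ Q.eval y) := by
  subst hQ
  constructor
  · refine fun hP => nonneg_on_Icc_of_nonneg_on_Ico (Polynomial.continuous _) zero_ne_one ?_
    rintro y ⟨hy0, hy1⟩
    have h1y : 0 ≤ 1 - y := sub_nonneg.mpr hy1.le
    rw [eval_sum_coeff_mul_X_pow_mul_one_sub_X_pow hn hy1.ne]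
    exact mul_nonneg (pow_nonneg h1y n) (hP _ (div_nonneg hy0 h1y))
  · intro hQ x hx
    have h1x : 0 < 1 + x := by linarith
    rw [eval_eq_one_add_pow_mul_eval_sum_coeff_mul_X_pow_mul_one_sub_X_pow hn h1x.ne']
    refine mul_nonneg (pow_nonneg h1x.le n) (hQ _ ⟨by positivity, ?_⟩)
    exact (div_le_one h1x).mpr (by linarith)
end

section
/- Let s be a real number with 0 < s < 1/2 and let m ≥ 0 be an integer. Then the integrals below are finite and ∫₀^{2π} cos(mθ)·|1−e^{iθ}|^{2s−1} dθ = ((1/2−s)_m / (1/2+s)_m) · ∫₀^{2π} |1−e^{iθ}|^{2s−1} dθ. (This is the Fourier diagonalization of the complementary series norm: with Δ = 1/2+s, the quadratic form ∫∫ |dz||dw| conj(f(z)) f(w) / |z−w|^{2−2Δ} on the unit circle equals C·Σ_m ((1/2−s)_{|m|}/(1/2+s)_{|m|}) |f_m|² in terms of the Fourier coefficients f_m of f.) -/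
open Real MeasureTheory

/-! The weight `w θ = |1 - e^{iθ}|^{2s-1} = |2 sin (θ/2)|^{2s-1}` satisfies a two-term recursion
in the frequency: differentiating `cos ((m + 1/2) θ) · |2 sin (θ/2)|^{2s}`, which vanishes at `0`
and `2π`, and integrating over `[0, 2π]` gives
`(m + 1/2 + s) ∫ cos ((m+1) θ) w = (m + 1/2 - s) ∫ cos (m θ) w`.
Iterating from `m = 0` produces the Pochhammer ratio. Integrability near the zeros of the weight
comes from Jordan's inequality `sin x ≥ 2x/π`. -/

/-- `chordPow p θ = |1 - e^{iθ}|^p`, see `norm_one_sub_exp_I_mul`. -/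
noncomputable def chordPow (p θ : ℝ) : ℝ := |2 * Real.sin (θ / 2)| ^ p

lemma norm_one_sub_exp_I_mul (θ : ℝ) :
    ‖1 - Complex.exp (Complex.I * θ)‖ = |2 * Real.sin (θ / 2)| := by
  rw [norm_sub_rev, Complex.norm_exp_I_mul_ofReal_sub_one, Real.norm_eq_abs]

section chordPow

variable {p : ℝ}

lemma chordPow_two_pi_sub (θ : ℝ) : chordPow p (2 * π - θ) = chordPow p θ := by
  rw [chordPow, chordPow, show (2 * π - θ) / 2 = π - θ / 2 by ring, Real.sin_pi_sub]

lemma continuous_chordPow (hp : 0 ≤ p) : Continuous (chordPow p) :=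
  (Real.continuous_rpow_const hp).comp (by fun_prop)

lemma chordPow_le_rpow_of_nonpos (hp : p ≤ 0) {θ : ℝ} (hθ : θ ∈ Set.Ioc 0 π) :
    chordPow p θ ≤ (2 / π) ^ p * θ ^ p := by
  obtain ⟨hθ0, hθπ⟩ := hθ
  have jordan : 2 / π * θ ≤ |2 * Real.sin (θ / 2)| := by
    have hsin := Real.mul_le_sin (x := θ / 2) (by linarith) (by linarith)
    have hθ_nonneg : 0 ≤ 2 / π * (θ / 2) := by positivity
    rw [abs_of_nonneg (by linarith)]
    linarith
  rw [← Real.mul_rpow (by positivity) hθ0.le]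
  exact Real.rpow_le_rpow_of_nonpos (by positivity) jordan hp

lemma intervalIntegrable_chordPow_zero_pi (hp : -1 < p) (hp0 : p ≤ 0) :
    IntervalIntegrable (chordPow p) volume 0 π := by
  refine ((intervalIntegral.intervalIntegrable_rpow' hp).const_mul ((2 / π) ^ p)).mono_fun'
    (by unfold chordPow; fun_prop : Measurable (chordPow p)).aestronglyMeasurable ?_
  rw [Set.uIoc_of_le pi_pos.le]
  refine (ae_restrict_iff' measurableSet_Ioc).2 (.of_forall fun θ hθ => ?_)
  simp only [Real.norm_of_nonneg (by unfold chordPow; positivity : 0 ≤ chordPow p θ)]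
  exact chordPow_le_rpow_of_nonpos hp0 hθ

lemma intervalIntegrable_chordPow (hp : -1 < p) :
    IntervalIntegrable (chordPow p) volume 0 (2 * π) := by
  rcases le_total 0 p with hp0 | hp0
  · exact (continuous_chordPow hp0).intervalIntegrable _ _
  have hleft := intervalIntegrable_chordPow_zero_pi hp hp0
  have hright : IntervalIntegrable (chordPow p) volume π (2 * π) := by
    have := hleft.comp_sub_left (2 * π)
    simp only [chordPow_two_pi_sub, sub_zero, show 2 * π - π = π by ring] at this
    exact this.symm
  exact hleft.trans hright

lemma intervalIntegrable_cos_mul_chordPow (hp : -1 < p) (c : ℝ) :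
    IntervalIntegrable (fun θ => Real.cos (c * θ) * chordPow p θ) volume 0 (2 * π) := by
  refine (intervalIntegrable_chordPow hp).mono_fun
    (by unfold chordPow; fun_prop : Measurable _).aestronglyMeasurable (.of_forall fun θ => ?_)
  simp only [norm_mul]
  exact mul_le_of_le_one_left (norm_nonneg _) (Real.abs_cos_le_one _)

lemma hasDerivAt_chordPow {θ : ℝ} (hθ : 0 < Real.sin (θ / 2)) :
    HasDerivAt (chordPow p) (Real.cos (θ / 2) * p * chordPow (p - 1) θ) θ := by
  have hsin : ∀ᶠ x in nhds θ, chordPow p x = (2 * Real.sin (x / 2)) ^ p := by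
    filter_upwards [(continuous_sin.comp (continuous_id.div_const 2)).continuousAt.eventually
      (lt_mem_nhds hθ)] with x hx
    rw [chordPow, abs_of_pos (by simpa using hx)]
  have hu : HasDerivAt (fun x => 2 * Real.sin (x / 2)) (Real.cos (θ / 2)) θ := by
    refine ((((hasDerivAt_id' θ).div_const 2).sin).const_mul 2).congr_deriv ?_
    ring
  refine ((hu.rpow_const (Or.inl (by positivity))).congr_of_eventuallyEq hsin).congr_deriv ?_
  rw [chordPow, abs_of_pos (by positivity)]

lemma hasDerivAt_cos_mul_chordPow (c s : ℝ) {θ : ℝ} (hθ : 0 < Real.sin (θ / 2)) :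
    HasDerivAt (fun x => Real.cos ((c + 1 / 2) * x) * chordPow (2 * s) x)
      ((c + 1 / 2 + s) * (Real.cos ((c + 1) * θ) * chordPow (2 * s - 1) θ)
        - (c + 1 / 2 - s) * (Real.cos (c * θ) * chordPow (2 * s - 1) θ)) θ := by
  have hc : HasDerivAt (fun x => Real.cos ((c + 1 / 2) * x))
      (-Real.sin ((c + 1 / 2) * θ) * (c + 1 / 2)) θ := by
    simpa using ((hasDerivAt_id θ).const_mul (c + 1 / 2)).cos
  refine (hc.mul (hasDerivAt_chordPow (p := 2 * s) hθ)).congr_deriv ?_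
  have hsplit : chordPow (2 * s) θ = chordPow (2 * s - 1) θ * (2 * Real.sin (θ / 2)) := by
    rw [chordPow, chordPow, abs_of_pos (by positivity), ← Real.rpow_add_one (by positivity)]
    ring_nf
  rw [hsplit, show (c + 1) * θ = (c + 1 / 2) * θ + θ / 2 by ring,
    show c * θ = (c + 1 / 2) * θ - θ / 2 by ring, Real.cos_add, Real.cos_sub]
  ring

lemma chordPow_eq_zero_of_sin_eq_zero (hp : p ≠ 0) {θ : ℝ} (hθ : Real.sin (θ / 2) = 0) :
    chordPow p θ = 0 := by
  rw [chordPow, hθ, mul_zero, abs_zero, Real.zero_rpow hp]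

end chordPow

section recursion

variable {s : ℝ}

lemma integral_cos_succ_mul_chordPow (hs : 0 < s) (c : ℝ) :
    (c + 1 / 2 + s) * ∫ θ in (0)..(2 * π), Real.cos ((c + 1) * θ) * chordPow (2 * s - 1) θ
      = (c + 1 / 2 - s) * ∫ θ in (0)..(2 * π), Real.cos (c * θ) * chordPow (2 * s - 1) θ := by
  have hp : -1 < 2 * s - 1 := by linarith
  have hint (c' : ℝ) := intervalIntegrable_cos_mul_chordPow hp c'
  have hftc := intervalIntegral.integral_eq_sub_of_hasDerivAt_of_le
    (f := fun x => Real.cos ((c + 1 / 2) * x) * chordPow (2 * s) x) (by positivity)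
    ((continuous_cos.comp (continuous_const_mul _)).mul
      (continuous_chordPow (by positivity))).continuousOn
    (fun θ hθ => hasDerivAt_cos_mul_chordPow c s
      (Real.sin_pos_of_pos_of_lt_pi (by linarith [hθ.1]) (by linarith [hθ.2])))
    (((hint _).const_mul _).sub ((hint _).const_mul _))
  have hs0 : 2 * s ≠ 0 := by positivity
  have hzero : chordPow (2 * s) 0 = 0 := chordPow_eq_zero_of_sin_eq_zero hs0 (by simp)
  have htwo_pi : chordPow (2 * s) (2 * π) = 0 :=
    chordPow_eq_zero_of_sin_eq_zero hs0 (by rw [mul_div_cancel_left₀ _ two_ne_zero, Real.sin_pi])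
  rw [hzero, htwo_pi, intervalIntegral.integral_sub
    ((hint _).const_mul _) ((hint _).const_mul _), intervalIntegral.integral_const_mul,
    intervalIntegral.integral_const_mul] at hftc
  linarith

theorem integral_cos_nat_mul_chordPow (hs : 0 < s) (m : ℕ) :
    ∫ θ in (0)..(2 * π), Real.cos (m * θ) * chordPow (2 * s - 1) θ
      = (ascPochhammer ℝ m).eval (1 / 2 - s) / (ascPochhammer ℝ m).eval (1 / 2 + s) *
        ∫ θ in (0)..(2 * π), chordPow (2 * s - 1) θ := by
  induction m with
  | zero => simp
  | succ m ih =>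
    have hrec := integral_cos_succ_mul_chordPow hs m
    have hpos : 0 < (ascPochhammer ℝ m).eval (1 / 2 + s) := ascPochhammer_pos m _ (by positivity)
    rw [ih] at hrec
    rw [Nat.cast_succ, ascPochhammer_succ_eval, ascPochhammer_succ_eval]
    apply mul_left_cancel₀ (by positivity : (m : ℝ) + 1 / 2 + s ≠ 0)
    rw [hrec]
    field_simp
    ring

end recursion

theorem complementary_series_fourier_general (s : ℝ) (hs0 : 0 < s) (m : ℕ) :
    IntervalIntegrable
      (fun θ : ℝ => ‖1 - Complex.exp (Complex.I * (θ : ℂ))‖ ^ (2 * s - 1))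
      volume 0 (2 * π) ∧
    IntervalIntegrable
      (fun θ : ℝ => Real.cos (m * θ) *
        ‖1 - Complex.exp (Complex.I * (θ : ℂ))‖ ^ (2 * s - 1))
      volume 0 (2 * π) ∧
    (∫ θ in (0 : ℝ)..(2 * π), Real.cos (m * θ) *
        ‖1 - Complex.exp (Complex.I * (θ : ℂ))‖ ^ (2 * s - 1)) =
      ((ascPochhammer ℝ m).eval (1 / 2 - s) / (ascPochhammer ℝ m).eval (1 / 2 + s)) *
        ∫ θ in (0 : ℝ)..(2 * π),
          ‖1 - Complex.exp (Complex.I * (θ : ℂ))‖ ^ (2 * s - 1) := by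
  have hp : -1 < 2 * s - 1 := by linarith
  simp only [norm_one_sub_exp_I_mul]
  exact ⟨intervalIntegrable_chordPow hp, intervalIntegrable_cos_mul_chordPow hp m,
    integral_cos_nat_mul_chordPow hs0 m⟩

/-- Fourier diagonalization of the complementary series norm: for `0 < s < 1/2` and
`m ≥ 0`, the integrals below are finite and
`∫₀^{2π} cos(mθ)·|1−e^{iθ}|^{2s−1} dθ
  = ((1/2−s)_m / (1/2+s)_m) · ∫₀^{2π} |1−e^{iθ}|^{2s−1} dθ`. -/
theorem complementary_series_fourier (s : ℝ) (hs0 : 0 < s) (hs : s < 1 / 2) (m : ℕ) :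
    IntervalIntegrable
      (fun θ : ℝ => ‖1 - Complex.exp (Complex.I * (θ : ℂ))‖ ^ (2 * s - 1))
      volume 0 (2 * π) ∧
    IntervalIntegrable
      (fun θ : ℝ => Real.cos (m * θ) *
        ‖1 - Complex.exp (Complex.I * (θ : ℂ))‖ ^ (2 * s - 1))
      volume 0 (2 * π) ∧
    (∫ θ in (0 : ℝ)..(2 * π), Real.cos (m * θ) *
        ‖1 - Complex.exp (Complex.I * (θ : ℂ))‖ ^ (2 * s - 1)) =
      ((ascPochhammer ℝ m).eval (1 / 2 - s) / (ascPochhammer ℝ m).eval (1 / 2 + s)) *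
        ∫ θ in (0 : ℝ)..(2 * π),
          ‖1 - Complex.exp (Complex.I * (θ : ℂ))‖ ^ (2 * s - 1) :=
  complementary_series_fourier_general s hs0 m
end
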